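/- arXiv:1808.10253 — 3 statements merged into one kernel-verified Lean document; each statement's English description precedes it below -/
import Mathlib

section
/- Let σ be a weight function satisfying σ(t) = o(t) as t → ∞ which is equivalent to a concave weight function. Then there is a constant H ≥ 1 such that \underline{s}_{j+k}^ξ ≤ H^{j+k} \underline{s}_j^{2ξ} \underline{s}_k^{2ξ} for all ξ > 0 and all j, k ∈ ℕ. -/
open Real Filter MeasureTheory Asymptotics
open scoped BigOperators Topology NNReal ENNReal

noncomputable section

/-- `ω` is a weight function: continuous, increasing on `[0,∞)`, `ω(0)=0`, `ω(t)→∞`,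
`ω(2t)=O(ω(t))`, `log t = o(ω(t))`, and `φ_ω = ω ∘ exp` is convex on `[0,∞)`. -/
structure IsWeightFunction (ω : ℝ → ℝ) : Prop where
  continuousOn : ContinuousOn ω (Set.Ici 0)
  monotoneOn : MonotoneOn ω (Set.Ici 0)
  map_zero : ω 0 = 0
  nonneg : ∀ t : ℝ, 0 ≤ t → 0 ≤ ω t
  tendsto_atTop : Tendsto ω atTop atTop
  isBigO_two_mul : (fun t => ω (2 * t)) =O[atTop] ω
  log_isLittleO : Real.log =o[atTop] ω
  convexOn_comp_exp : ConvexOn ℝ (Set.Ici 0) (fun x => ω (Real.exp x))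

/-- Equivalence of weight functions: each is `O` of the other at `∞`. -/
def WeightEquiv (ω σ : ℝ → ℝ) : Prop :=
  ω =O[atTop] σ ∧ σ =O[atTop] ω

/-- `ω` is non-quasianalytic: `∫_1^∞ ω(t)/t² dt < ∞`. -/
def NonQuasianalytic (ω : ℝ → ℝ) : Prop :=
  IntegrableOn (fun t : ℝ => ω t / t ^ 2) (Set.Ici 1)

/-- Young conjugate `φ_ω*(y) = sup_{x ≥ 0} (x y − ω(exp x))`. -/
def youngConj (ω : ℝ → ℝ) (y : ℝ) : ℝ :=
  ⨆ x : Set.Ici (0 : ℝ), ((x : ℝ) * y - ω (Real.exp (x : ℝ)))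

/-- `S_k^ξ = exp((1/ξ) φ_σ*(ξ k))`. -/
def assocSBig (σ : ℝ → ℝ) (ξ : ℝ) (k : ℕ) : ℝ :=
  Real.exp ((1 / ξ) * youngConj σ (ξ * k))

/-- `s_k^ξ = S_k^ξ / k!`. -/
def assocS (σ : ℝ → ℝ) (ξ : ℝ) (k : ℕ) : ℝ :=
  assocSBig σ ξ k / (Nat.factorial k : ℝ)

/-- `ω_m(t) = sup_k log(t^k / m_k)` for `t > 0`. -/
def omegaM (m : ℕ → ℝ) (t : ℝ) : ℝ := ⨆ k : ℕ, Real.log (t ^ k / m k)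

/-- The log-convex minorant `\underline{m}_k = sup_{t>0} t^k / exp(ω_m(t))`. -/
def lcMinorant (m : ℕ → ℝ) (k : ℕ) : ℝ :=
  ⨆ t : Set.Ioi (0 : ℝ), (t : ℝ) ^ k / Real.exp (omegaM m (t : ℝ))

/-- `h_m(t) = inf_k m_k t^k` (for `t > 0`). -/
def hFun (m : ℕ → ℝ) (t : ℝ) : ℝ := ⨅ k : ℕ, m k * t ^ k

/-- `Γ_m(t) = min{k : m_{k+1}/m_k ≥ 1/t}`. -/
def GammaIdx (m : ℕ → ℝ) (t : ℝ) : ℕ := sInf {k : ℕ | 1 / t ≤ m (k + 1) / m k}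

/-- Infimal convolution of a sequence with itself: `v_k = min_{0 ≤ j ≤ k} s_j s_{k-j}`. -/
def infConv (s : ℕ → ℝ) (k : ℕ) : ℝ :=
  (Finset.range (k + 1)).inf' Finset.nonempty_range_add_one (fun j => s j * s (k - j))

/- Multi-index machinery. -/

/-- `|α| = ∑ α_i`. -/
def mSum {n : ℕ} (α : Fin n → ℕ) : ℕ := ∑ i, α i

/-- `α! = ∏ (α_i)!`. -/
def mFact {n : ℕ} (α : Fin n → ℕ) : ℕ := ∏ i, Nat.factorial (α i)

/-- `x^α = ∏ x_i^{α_i}`. -/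
def mPow {n : ℕ} (x : Fin n → ℝ) (α : Fin n → ℕ) : ℝ := ∏ i, x i ^ α i

/-- The finite set of multi-indices `β` with `|β| ≤ m`. -/
def mIdxLe (n m : ℕ) : Finset (Fin n → ℕ) :=
  (Fintype.piFinset fun _ => Finset.range (m + 1)).filter fun β => mSum β ≤ m

/-- First-order partial derivative in the `i`-th coordinate direction. -/
def pderivI {n : ℕ} (i : Fin n) (f : (Fin n → ℝ) → ℝ) : (Fin n → ℝ) → ℝ :=
  fun x => fderiv ℝ f x (Pi.single i 1)

/-- Iterated partial derivative `∂^α f`. -/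
def mDeriv {n : ℕ} (α : Fin n → ℕ) (f : (Fin n → ℝ) → ℝ) : (Fin n → ℝ) → ℝ :=
  (List.finRange n).foldr (fun i g => (pderivI i)^[α i] g) f

/-- Taylor polynomial of degree `p` of a jet `F` at `a`:
`T_a^p F(y) = ∑_{|β| ≤ p} F^β(a) (y-a)^β / β!`. -/
def jetTaylor {n : ℕ} (F : (Fin n → ℕ) → (Fin n → ℝ) → ℝ) (p : ℕ) (a : Fin n → ℝ) :
    (Fin n → ℝ) → ℝ :=
  fun y => ∑ β ∈ mIdxLe n p, F β a * mPow (y - a) β / (mFact β : ℝ)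

/-- Whitney remainder `(R_a^k F)^α(b) = F^α(b) − ∑_{|β| ≤ k−|α|} F^{α+β}(a)(b-a)^β/β!`. -/
def jetRem {n : ℕ} (F : (Fin n → ℕ) → (Fin n → ℝ) → ℝ) (k : ℕ) (α : Fin n → ℕ)
    (a b : Fin n → ℝ) : ℝ :=
  F α b - ∑ β ∈ mIdxLe n (k - mSum α), F (α + β) a * mPow (b - a) β / (mFact β : ℝ)

/-- A jet on `E`: a family of functions continuous on `E`. -/
def IsJet {n : ℕ} (E : Set (Fin n → ℝ)) (F : (Fin n → ℕ) → (Fin n → ℝ) → ℝ) : Prop :=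
  ∀ α : Fin n → ℕ, ContinuousOn (F α) E

/-- Whitney ultrajet of Roumieu class `B^{σ}` (weight function `σ`) on `E`. -/
def IsWhitneyUltrajetW {n : ℕ} (σ : ℝ → ℝ) (E : Set (Fin n → ℝ))
    (F : (Fin n → ℕ) → (Fin n → ℝ) → ℝ) : Prop :=
  IsJet E F ∧ ∃ ξ : ℝ, 0 < ξ ∧ ∃ C : ℝ, 0 < C ∧ ∃ ρ : ℝ, 1 ≤ ρ ∧
    (∀ α : Fin n → ℕ, ∀ a ∈ E,
      |F α a| ≤ C * ρ ^ (mSum α) * Real.exp ((1 / ξ) * youngConj σ (ξ * (mSum α : ℝ)))) ∧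
    (∀ k : ℕ, ∀ α : Fin n → ℕ, mSum α ≤ k → ∀ a ∈ E, ∀ b ∈ E,
      |jetRem F k α a b| ≤ C * ρ ^ (k + 1) *
        ((Nat.factorial (mSum α) : ℝ) / (Nat.factorial (k + 1) : ℝ)) *
        Real.exp ((1 / ξ) * youngConj σ (ξ * ((k : ℝ) + 1))) *
        ‖b - a‖ ^ (k + 1 - mSum α))

/-- Global Roumieu class `B^{ω}(U)` for a weight function `ω`. -/
def MemRoumieuW {n : ℕ} (ω : ℝ → ℝ) (U : Set (Fin n → ℝ)) (f : (Fin n → ℝ) → ℝ) : Prop :=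
  ContDiffOn ℝ (⊤ : ℕ∞) f U ∧ ∃ C : ℝ, 0 < C ∧ ∃ ρ : ℝ, 0 < ρ ∧
    ∀ α : Fin n → ℕ, ∀ x ∈ U,
      |mDeriv α f x| ≤ C * Real.exp ((1 / ρ) * youngConj ω (ρ * (mSum α : ℝ)))

/-- Global Beurling class `B^{(ω)}(U)` for a weight function `ω`. -/
def MemBeurlingW {n : ℕ} (ω : ℝ → ℝ) (U : Set (Fin n → ℝ)) (f : (Fin n → ℝ) → ℝ) : Prop :=
  ContDiffOn ℝ (⊤ : ℕ∞) f U ∧ ∀ ρ : ℝ, 0 < ρ → ∃ C : ℝ, 0 < C ∧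
    ∀ α : Fin n → ℕ, ∀ x ∈ U,
      |mDeriv α f x| ≤ C * Real.exp ((1 / ρ) * youngConj ω (ρ * (mSum α : ℝ)))

/-- Global Roumieu class `B^{M}(U)` for a weight sequence `M`. -/
def MemRoumieuM {n : ℕ} (M : ℕ → ℝ) (U : Set (Fin n → ℝ)) (f : (Fin n → ℝ) → ℝ) : Prop :=
  ContDiffOn ℝ (⊤ : ℕ∞) f U ∧ ∃ C : ℝ, 0 < C ∧ ∃ ρ : ℝ, 0 < ρ ∧
    ∀ α : Fin n → ℕ, ∀ x ∈ U, |mDeriv α f x| ≤ C * ρ ^ (mSum α) * M (mSum α)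

/-- Global Beurling class `B^{(M)}(U)` for a weight sequence `M`. -/
def MemBeurlingM {n : ℕ} (M : ℕ → ℝ) (U : Set (Fin n → ℝ)) (f : (Fin n → ℝ) → ℝ) : Prop :=
  ContDiffOn ℝ (⊤ : ℕ∞) f U ∧ ∀ ρ : ℝ, 0 < ρ → ∃ C : ℝ, 0 < C ∧
    ∀ α : Fin n → ℕ, ∀ x ∈ U, |mDeriv α f x| ≤ C * ρ ^ (mSum α) * M (mSum α)

/-- Roumieu class of a weight matrix: union over the matrix. -/
def MemRoumieuMx {n : ℕ} (𝔐 : Set (ℕ → ℝ)) (U : Set (Fin n → ℝ))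
    (f : (Fin n → ℝ) → ℝ) : Prop :=
  ∃ M ∈ 𝔐, MemRoumieuM M U f

/-- Beurling class of a weight matrix: intersection over the matrix. -/
def MemBeurlingMx {n : ℕ} (𝔐 : Set (ℕ → ℝ)) (U : Set (Fin n → ℝ))
    (f : (Fin n → ℝ) → ℝ) : Prop :=
  ∀ M ∈ 𝔐, MemBeurlingM M U f

/-- A weight sequence: `M_0 = 1`, log-convex, `M_k ≥ k!`, `M_k^{1/k} → ∞`. -/
structure IsWeightSeq (M : ℕ → ℝ) : Prop where
  map_zero : M 0 = 1
  logConvex : ∀ k : ℕ, 1 ≤ k → M k ^ 2 ≤ M (k - 1) * M (k + 1)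
  factorial_le : ∀ k : ℕ, (Nat.factorial k : ℝ) ≤ M k
  root_tendsto : Tendsto (fun k : ℕ => M k ^ ((k : ℝ)⁻¹)) atTop atTop

/-- `M` is strongly log-convex: `(M_k/k!)` is log-convex. -/
def StronglyLogConvex (M : ℕ → ℝ) : Prop :=
  ∀ k : ℕ, 1 ≤ k → (M k / (Nat.factorial k : ℝ)) ^ 2 ≤
    (M (k - 1) / (Nat.factorial (k - 1) : ℝ)) * (M (k + 1) / (Nat.factorial (k + 1) : ℝ))

/-- A weight matrix: a nonempty family of weight sequences, totally ordered pointwise. -/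
def IsWeightMatrix (𝔐 : Set (ℕ → ℝ)) : Prop :=
  𝔐.Nonempty ∧ (∀ M ∈ 𝔐, IsWeightSeq M) ∧
    ∀ M ∈ 𝔐, ∀ N ∈ 𝔐, (∀ k, M k ≤ N k) ∨ (∀ k, N k ≤ M k)


/-! ### Auxiliary lemmas for Proposition 3 -/

lemma youngConj_bdd (σ : ℝ → ℝ) (hσ : IsWeightFunction σ) (y : ℝ) (hy : 0 ≤ y) :
    BddAbove (Set.range fun x : Set.Ici (0:ℝ) => (x : ℝ) * y - σ (Real.exp (x : ℝ))) := by
  have hε : (0:ℝ) < 1/(y+1) := by positivity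
  have h := hσ.log_isLittleO.def hε
  rw [Filter.eventually_atTop] at h
  obtain ⟨T, hT⟩ := h
  set X : ℝ := max (Real.log (max T 1)) 0 with hX
  refine ⟨max 0 (X * y), ?_⟩
  rintro _ ⟨⟨x, hx⟩, rfl⟩
  simp only
  have hσnn : 0 ≤ σ (Real.exp x) := hσ.nonneg _ (Real.exp_pos x).le
  rcases le_or_gt x X with hxX | hxX
  · have h1 : x * y ≤ X * y := mul_le_mul_of_nonneg_right hxX hy
    have h2 : x * y - σ (Real.exp x) ≤ X * y := by linarith
    exact h2.trans (le_max_right _ _)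
  · have hT1 : (1:ℝ) ≤ max T 1 := le_max_right _ _
    have hexp : max T 1 ≤ Real.exp x := by
      calc max T 1 = Real.exp (Real.log (max T 1)) := (Real.exp_log (by linarith)).symm
        _ ≤ Real.exp x := Real.exp_le_exp.2
            (le_of_lt (lt_of_le_of_lt (le_max_left _ _) hxX))
    have h3 := hT (Real.exp x) (le_trans (le_max_left _ _) hexp)
    have hx0 : (0:ℝ) ≤ x := le_trans (le_max_right _ _) hxX.le
    rw [Real.log_exp, Real.norm_eq_abs, Real.norm_eq_abs, abs_of_nonneg hx0,
      abs_of_nonneg hσnn] at h3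
    have hkey : x * (y+1) ≤ σ (Real.exp x) := by
      rw [div_mul_eq_mul_div, le_div_iff₀ (by positivity)] at h3
      nlinarith
    have h4 : x * y - σ (Real.exp x) ≤ 0 := by nlinarith
    exact h4.trans (le_max_left _ _)

lemma youngConj_ge (σ : ℝ → ℝ) (hσ : IsWeightFunction σ) {y : ℝ} (hy : 0 ≤ y)
    {x : ℝ} (hx : 0 ≤ x) : x * y - σ (Real.exp x) ≤ youngConj σ y :=
  le_ciSup (youngConj_bdd σ hσ y hy) (⟨x, hx⟩ : Set.Ici (0:ℝ))

lemma assocS_pos (σ : ℝ → ℝ) (ξ : ℝ) (k : ℕ) : 0 < assocS σ ξ k := by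
  unfold assocS assocSBig
  positivity

lemma log_assocS_term (σ : ℝ → ℝ) {ξ t : ℝ} (ht : 0 < t) (k : ℕ) :
    Real.log (t ^ k / assocS σ ξ k)
      = k * Real.log t + Real.log (Nat.factorial k : ℝ)
        - (1/ξ) * youngConj σ (ξ * k) := by
  have h1 : t ^ k / assocS σ ξ k
      = t ^ k * (Nat.factorial k : ℝ) / Real.exp ((1/ξ) * youngConj σ (ξ * k)) := by
    unfold assocS assocSBig
    rw [div_div_eq_mul_div]
  have hfac : (0:ℝ) < (Nat.factorial k : ℝ) := by exact_mod_cast Nat.factorial_pos k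
  rw [h1, Real.log_div (by positivity) (Real.exp_ne_zero _),
    Real.log_mul (by positivity) (by positivity), Real.log_pow, Real.log_exp]

lemma omegaM_bdd (σ : ℝ → ℝ) (hσ : IsWeightFunction σ)
    (hσo : σ =o[atTop] (fun t : ℝ => t)) {ξ t : ℝ} (hξ : 0 < ξ) (ht : 0 < t) :
    BddAbove (Set.range fun k : ℕ => Real.log (t ^ k / assocS σ ξ k)) := by
  set c : ℝ := max 0 (Real.log t + 1) with hc
  have hε : (0:ℝ) < ξ * Real.exp (-c) := by positivity
  have h := hσo.def hε
  rw [Filter.eventually_atTop] at h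
  obtain ⟨T, hT⟩ := h
  set K : ℕ := ⌈T * Real.exp (-c)⌉₊ + 1 with hK
  set f : ℕ → ℝ := fun k => Real.log (t ^ k / assocS σ ξ k) with hf
  refine ⟨max ((Finset.range (K+1)).sup' Finset.nonempty_range_add_one f) 0, ?_⟩
  rintro _ ⟨k, rfl⟩
  rcases lt_or_ge k (K+1) with hk | hk
  · exact le_max_of_le_left (Finset.le_sup' f (Finset.mem_range.2 hk))
  · refine le_max_of_le_right ?_
    have hk1 : 1 ≤ k := le_trans (Nat.le_add_left 1 K) hk
    have hkpos : (0:ℝ) < (k:ℝ) := by exact_mod_cast hk1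
    have hkT : T ≤ (k:ℝ) * Real.exp c := by
      have h1 : T * Real.exp (-c) ≤ (K:ℝ) := le_trans (Nat.le_ceil _)
        (by exact_mod_cast Nat.le_succ _)
      have h2 : (K:ℝ) ≤ (k:ℝ) := by exact_mod_cast le_trans (Nat.le_succ K) hk
      have h3 : T * Real.exp (-c) ≤ (k:ℝ) := le_trans h1 h2
      have h4 := mul_le_mul_of_nonneg_right h3 (Real.exp_pos c).le
      rwa [mul_assoc, ← Real.exp_add, neg_add_cancel, Real.exp_zero, mul_one] at h4
    have hσb := hT ((k:ℝ) * Real.exp c) hkT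
    have hσbpos : (0:ℝ) ≤ (k:ℝ) * Real.exp c := by positivity
    rw [Real.norm_eq_abs, Real.norm_eq_abs, abs_of_nonneg (hσ.nonneg _ hσbpos),
      abs_of_nonneg hσbpos] at hσb
    have hσb2 : σ ((k:ℝ) * Real.exp c) ≤ ξ * (k:ℝ) := by
      have he : ξ * Real.exp (-c) * ((k:ℝ) * Real.exp c) = ξ * (k:ℝ) := by
        rw [Real.exp_neg]
        field_simp
      rw [he] at hσb
      exact hσb
    have hlogk : (0:ℝ) ≤ Real.log (k:ℝ) := Real.log_nonneg (by exact_mod_cast hk1)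
    have hc0 : (0:ℝ) ≤ c := le_max_left _ _
    have hx0 : (0:ℝ) ≤ Real.log (k:ℝ) + c := by linarith
    have hY := youngConj_ge σ hσ (y := ξ * k) (by positivity) hx0
    rw [Real.exp_add, Real.exp_log hkpos] at hY
    have h5 : (Real.log (k:ℝ) + c) * (ξ * k) - ξ * k ≤ youngConj σ (ξ * k) := by nlinarith
    have h6 : (1/ξ) * ((Real.log (k:ℝ) + c) * (ξ * k) - ξ * k)
        ≤ (1/ξ) * youngConj σ (ξ * k) := mul_le_mul_of_nonneg_left h5 (by positivity)
    have h7 : (1/ξ) * ((Real.log (k:ℝ) + c) * (ξ * k) - ξ * k)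
        = (k:ℝ) * Real.log (k:ℝ) + c * k - (k:ℝ) := by
      field_simp
    rw [h7] at h6
    have hfaclog : Real.log (Nat.factorial k : ℝ) ≤ (k:ℝ) * Real.log (k:ℝ) := by
      have hle : (Nat.factorial k : ℝ) ≤ (k:ℝ) ^ k := by
        exact_mod_cast Nat.factorial_le_pow k
      calc Real.log (Nat.factorial k : ℝ) ≤ Real.log ((k:ℝ) ^ k) :=
            Real.log_le_log (by exact_mod_cast Nat.factorial_pos k) hle
        _ = (k:ℝ) * Real.log (k:ℝ) := by rw [Real.log_pow]
    have hcge : Real.log t + 1 ≤ c := le_max_right _ _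
    have heq : f k = (k:ℝ) * Real.log t + Real.log (Nat.factorial k : ℝ)
        - (1/ξ) * youngConj σ (ξ * k) := log_assocS_term σ ht k
    rw [heq]
    nlinarith [hkpos.le]

lemma omegaM_ge (σ : ℝ → ℝ) (hσ : IsWeightFunction σ)
    (hσo : σ =o[atTop] (fun t : ℝ => t)) {ξ t : ℝ} (hξ : 0 < ξ) (ht : 0 < t) (k : ℕ) :
    Real.log (t ^ k / assocS σ ξ k) ≤ omegaM (assocS σ ξ) t :=
  le_ciSup (omegaM_bdd σ hσ hσo hξ ht) k

lemma two_omegaM_le (σ : ℝ → ℝ) (hσ : IsWeightFunction σ)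
    (hσo : σ =o[atTop] (fun t : ℝ => t)) {ξ t : ℝ} (hξ : 0 < ξ) (ht : 0 < t) :
    2 * omegaM (assocS σ (2 * ξ)) t ≤ omegaM (assocS σ ξ) t := by
  have h2ξ : (0:ℝ) < 2 * ξ := by linarith
  have hhalf : omegaM (assocS σ (2 * ξ)) t ≤ omegaM (assocS σ ξ) t / 2 := by
    refine ciSup_le fun k => ?_
    have hkey : 2 * Real.log (t ^ k / assocS σ (2 * ξ) k)
        ≤ Real.log (t ^ (2 * k) / assocS σ ξ (2 * k)) := by
      rw [log_assocS_term σ ht k, log_assocS_term σ ht (2 * k)]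
      have harg : ξ * ((2 * k : ℕ) : ℝ) = (2 * ξ) * (k : ℝ) := by
        push_cast
        ring
      rw [harg]
      have hfac : ((Nat.factorial k : ℝ)) ^ 2 ≤ (Nat.factorial (2 * k) : ℝ) := by
        have hd : Nat.factorial k * Nat.factorial k ≤ Nat.factorial (2 * k) := by
          refine Nat.le_of_dvd (Nat.factorial_pos _) ?_
          have hdvd := Nat.factorial_mul_factorial_dvd_factorial_add k k
          rwa [← two_mul] at hdvd
        have hcast : (Nat.factorial k * Nat.factorial k : ℝ)
            ≤ (Nat.factorial (2 * k) : ℝ) := by exact_mod_cast hd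
        nlinarith
      have hlog : 2 * Real.log (Nat.factorial k : ℝ)
          ≤ Real.log (Nat.factorial (2 * k) : ℝ) := by
        have h1 : Real.log (((Nat.factorial k : ℝ)) ^ 2)
            ≤ Real.log (Nat.factorial (2 * k) : ℝ) :=
          Real.log_le_log (by positivity) hfac
        rwa [Real.log_pow] at h1
      have hξ0 : ξ ≠ 0 := ne_of_gt hξ
      have hYeq : 2 * (1 / (2 * ξ) * youngConj σ (2 * ξ * (k:ℝ)))
          = (1 / ξ) * youngConj σ (2 * ξ * (k:ℝ)) := by
        field_simp
      have hcast : ((2 * k : ℕ) : ℝ) = 2 * (k : ℝ) := by push_cast; ring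
      rw [hcast]
      linarith [hlog, hYeq]
    have h1 := omegaM_ge σ hσ hσo hξ ht (2 * k)
    linarith
  linarith

lemma lcFam_bdd (σ : ℝ → ℝ) (hσ : IsWeightFunction σ)
    (hσo : σ =o[atTop] (fun t : ℝ => t)) {ξ : ℝ} (hξ : 0 < ξ) (j : ℕ) :
    BddAbove (Set.range fun t : Set.Ioi (0:ℝ) =>
      (t : ℝ) ^ j / Real.exp (omegaM (assocS σ ξ) (t : ℝ))) := by
  refine ⟨assocS σ ξ j, ?_⟩
  rintro _ ⟨⟨t, ht⟩, rfl⟩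
  simp only
  have ht' : (0:ℝ) < t := ht
  have h1 := omegaM_ge σ hσ hσo hξ ht' j
  have hspos := assocS_pos σ ξ j
  have hpos : (0:ℝ) < t ^ j / assocS σ ξ j := by positivity
  have h2 : t ^ j / assocS σ ξ j ≤ Real.exp (omegaM (assocS σ ξ) t) := by
    calc t ^ j / assocS σ ξ j = Real.exp (Real.log (t ^ j / assocS σ ξ j)) :=
          (Real.exp_log hpos).symm
      _ ≤ Real.exp (omegaM (assocS σ ξ) t) := Real.exp_le_exp.2 h1
  rw [div_le_iff₀ (Real.exp_pos _)]
  rw [div_le_iff₀ hspos] at h2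
  linarith

/-- Proposition 3: moderate growth of the log-convex minorants across the matrix. -/
theorem prop3_moderate_growth (σ : ℝ → ℝ) (hσ : IsWeightFunction σ)
    (hσo : σ =o[atTop] (fun t : ℝ => t))
    (hconc : ∃ τ : ℝ → ℝ, IsWeightFunction τ ∧ ConcaveOn ℝ (Set.Ici 0) τ ∧ WeightEquiv σ τ) :
    ∃ H : ℝ, 1 ≤ H ∧ ∀ ξ : ℝ, 0 < ξ → ∀ j k : ℕ,
      lcMinorant (assocS σ ξ) (j + k) ≤
        H ^ (j + k) * lcMinorant (assocS σ (2 * ξ)) j * lcMinorant (assocS σ (2 * ξ)) k := by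
  refine ⟨1, le_refl 1, fun ξ hξ j k => ?_⟩
  have h2ξ : (0:ℝ) < 2 * ξ := by linarith
  haveI : Nonempty (Set.Ioi (0:ℝ)) := ⟨⟨1, Set.mem_Ioi.2 one_pos⟩⟩
  simp only [one_pow, one_mul]
  refine ciSup_le fun tt => ?_
  obtain ⟨t, ht⟩ := tt
  have ht' : (0:ℝ) < t := ht
  simp only
  have hLj := le_ciSup (lcFam_bdd σ hσ hσo h2ξ j) (⟨t, ht⟩ : Set.Ioi (0:ℝ))
  have hLk := le_ciSup (lcFam_bdd σ hσ hσo h2ξ k) (⟨t, ht⟩ : Set.Ioi (0:ℝ))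
  simp only at hLj hLk
  have hω := two_omegaM_le σ hσ hσo hξ ht'
  have hstep : t ^ (j + k) / Real.exp (omegaM (assocS σ ξ) t)
      ≤ (t ^ j / Real.exp (omegaM (assocS σ (2 * ξ)) t))
        * (t ^ k / Real.exp (omegaM (assocS σ (2 * ξ)) t)) := by
    have hexp : Real.exp (omegaM (assocS σ (2 * ξ)) t) * Real.exp (omegaM (assocS σ (2 * ξ)) t)
        ≤ Real.exp (omegaM (assocS σ ξ) t) := by
      rw [← Real.exp_add]
      exact Real.exp_le_exp.2 (by linarith)
    rw [pow_add, div_mul_div_comm]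
    exact div_le_div_of_nonneg_left (by positivity) (by positivity) hexp
  refine hstep.trans ?_
  have hnn1 : (0:ℝ) ≤ t ^ j / Real.exp (omegaM (assocS σ (2 * ξ)) t) := by positivity
  have hnn2 : (0:ℝ) ≤ t ^ k / Real.exp (omegaM (assocS σ (2 * ξ)) t) := by positivity
  exact mul_le_mul hLj hLk hnn2 (le_trans hnn1 hLj)
end
end

section
/- Let 𝔐 be a weight matrix such that for all N ∈ 𝔐 there is M ∈ 𝔐 with (M_{k+1}/N_k)^{1/k} bounded, and which additionally satisfies: for all N ∈ 𝔐 there are M ∈ 𝔐 and C > 0 with μ_k ≤ C N_k^{1/k} for all k ≥ 1. Then the following are equivalent: (a) for all N ∈ 𝔐 there exist M ∈ 𝔐 and C ≥ 1 such that μ_j/j ≤ C ν_k/k for all 1 ≤ j ≤ k; (d) for all N ∈ 𝔐 there exist M ∈ 𝔐 and C > 0 such that m_j^{1/j} ≤ C n_k^{1/k} for all 1 ≤ j ≤ k. -/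
open Real Filter MeasureTheory Asymptotics
open scoped BigOperators Topology NNReal ENNReal

noncomputable section

private lemma ws_pos {M : ℕ → ℝ} (h : IsWeightSeq M) (k : ℕ) : 0 < M k :=
  lt_of_lt_of_le (by exact_mod_cast Nat.factorial_pos k) (h.factorial_le k)

private lemma ws_mu_mono {M : ℕ → ℝ} (h : IsWeightSeq M) {j k : ℕ} (hj : 1 ≤ j)
    (hjk : j ≤ k) : M j / M (j - 1) ≤ M k / M (k - 1) := by
  induction k, hjk using Nat.le_induction with
  | base => exact le_rfl
  | succ k hk ih =>
    refine ih.trans ?_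
    have hk1 : 1 ≤ k := le_trans hj hk
    have hlc := h.logConvex k hk1
    have h1 : 0 < M (k - 1) := ws_pos h _
    have h2 : 0 < M k := ws_pos h _
    have : M k / M (k - 1) ≤ M (k + 1) / M k := by
      rw [div_le_div_iff₀ h1 h2]
      nlinarith
    simpa using this

private lemma ws_mu_pos {M : ℕ → ℝ} (h : IsWeightSeq M) (k : ℕ) : 0 < M k / M (k - 1) :=
  div_pos (ws_pos h k) (ws_pos h (k - 1))

private lemma ws_le_mu_pow {M : ℕ → ℝ} (h : IsWeightSeq M) {k : ℕ} (hk : 1 ≤ k) :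
    ∀ j, j ≤ k → M j ≤ (M k / M (k - 1)) ^ j := by
  intro j
  induction j with
  | zero => intro _; simpa using h.map_zero.le
  | succ j ih =>
    intro hjk
    have h1 := ih (Nat.le_of_succ_le hjk)
    have h2 : M (j + 1) / M j ≤ M k / M (k - 1) := by
      have := ws_mu_mono h (j := j + 1) (k := k) (Nat.succ_le_succ (Nat.zero_le j)) hjk
      simpa using this
    have hMj : 0 < M j := ws_pos h j
    have : M (j + 1) = M j * (M (j + 1) / M j) := by field_simp
    rw [this, pow_succ]
    exact mul_le_mul h1 h2 (le_of_lt (div_pos (ws_pos h _) (ws_pos h _)))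
      (pow_nonneg (ws_mu_pos h k).le j)

/-- Lemma A: `m_k^{1/k} ≤ e·μ_k/k`. -/
private lemma lemA {M : ℕ → ℝ} (h : IsWeightSeq M) {k : ℕ} (hk : 1 ≤ k) :
    (M k / (Nat.factorial k : ℝ)) ^ ((k : ℝ)⁻¹) ≤
      Real.exp 1 * ((M k / M (k - 1)) / (k : ℝ)) := by
  set μ := M k / M (k - 1) with hμdef
  have hμ : 0 < μ := ws_mu_pos h k
  have hkR : (0 : ℝ) < (k : ℝ) := by exact_mod_cast hk
  have hfac : (0 : ℝ) < (Nat.factorial k : ℝ) := by exact_mod_cast Nat.factorial_pos k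
  have hkk : (k : ℝ) ^ k / (Nat.factorial k : ℝ) ≤ Real.exp k :=
    Real.pow_div_factorial_le_exp (k:ℝ) hkR.le k
  have key : M k / (Nat.factorial k : ℝ) ≤ (Real.exp 1 * (μ / (k : ℝ))) ^ k := by
    have h1 : M k ≤ μ ^ k := ws_le_mu_pow h hk k le_rfl
    have h2 : (Real.exp 1 * (μ / (k : ℝ))) ^ k
        = Real.exp k * μ ^ k / (k : ℝ) ^ k := by
      rw [mul_pow, div_pow, Real.exp_one_pow]
      ring
    rw [h2]
    rw [div_le_div_iff₀ hfac (pow_pos hkR k)]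
    calc M k * (k:ℝ)^k ≤ μ ^ k * (k:ℝ)^k := by
          exact mul_le_mul_of_nonneg_right h1 (by positivity)
      _ ≤ μ ^ k * ((Nat.factorial k : ℝ) * Real.exp k) := by
          refine mul_le_mul_of_nonneg_left ?_ (pow_nonneg hμ.le k)
          rw [div_le_iff₀ hfac] at hkk; linarith [hkk]
      _ = Real.exp k * μ ^ k * (Nat.factorial k : ℝ) := by ring
  have hmnn : 0 ≤ M k / (Nat.factorial k : ℝ) := div_nonneg (ws_pos h k).le hfac.le
  calc (M k / (Nat.factorial k : ℝ)) ^ ((k : ℝ)⁻¹)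
      ≤ ((Real.exp 1 * (μ / (k : ℝ))) ^ k) ^ ((k : ℝ)⁻¹) :=
        Real.rpow_le_rpow hmnn key (by positivity)
    _ = Real.exp 1 * (μ / (k : ℝ)) := by
        rw [Real.pow_rpow_inv_natCast
          (mul_nonneg (Real.exp_pos 1).le (div_nonneg hμ.le hkR.le)) (by omega)]

/-- Lemma B: `N_k^{1/k}/k ≤ n_k^{1/k}`, phrased as `N_k^{1/k} ≤ k · n_k^{1/k}`. -/
private lemma lemB {M : ℕ → ℝ} (h : IsWeightSeq M) {k : ℕ} (hk : 1 ≤ k) :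
    M k ^ ((k : ℝ)⁻¹) ≤ (k : ℝ) * (M k / (Nat.factorial k : ℝ)) ^ ((k : ℝ)⁻¹) := by
  have hM : 0 < M k := ws_pos h k
  have hfac : (0 : ℝ) < (Nat.factorial k : ℝ) := by exact_mod_cast Nat.factorial_pos k
  have hkR : (0 : ℝ) < (k : ℝ) := by exact_mod_cast hk
  set m := M k / (Nat.factorial k : ℝ) with hm
  have hmpos : 0 < m := by positivity
  have key : M k ≤ ((k : ℝ) * m ^ ((k : ℝ)⁻¹)) ^ k := by
    have h1 : (Nat.factorial k : ℝ) ≤ (k : ℝ) ^ k := by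
      exact_mod_cast Nat.factorial_le_pow k
    have h2 : ((k : ℝ) * m ^ ((k : ℝ)⁻¹)) ^ k = (k : ℝ) ^ k * m := by
      rw [mul_pow, Real.rpow_inv_natCast_pow hmpos.le (by omega)]
    rw [h2]
    have : M k = m * (Nat.factorial k : ℝ) := (div_mul_cancel₀ _ hfac.ne').symm
    rw [this]
    calc m * (Nat.factorial k : ℝ) ≤ m * (k : ℝ) ^ k :=
          mul_le_mul_of_nonneg_left h1 hmpos.le
      _ = (k : ℝ) ^ k * m := by ring
  calc M k ^ ((k : ℝ)⁻¹) ≤ (((k : ℝ) * m ^ ((k : ℝ)⁻¹)) ^ k) ^ ((k : ℝ)⁻¹) :=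
        Real.rpow_le_rpow hM.le key (by positivity)
    _ = (k : ℝ) * m ^ ((k : ℝ)⁻¹) := by
        rw [Real.pow_rpow_inv_natCast
          (mul_nonneg hkR.le (Real.rpow_nonneg hmpos.le _)) (by omega)]

/-- Corollary 10, (a) ⇔ (d) under condition (29): Beurling case. -/
theorem cor10_a_iff_d (𝔐 : Set (ℕ → ℝ)) (h𝔐 : IsWeightMatrix 𝔐)
    (hder : ∀ N ∈ 𝔐, ∃ M ∈ 𝔐, ∃ C : ℝ,
      ∀ k : ℕ, (M (k + 1) / N k) ^ ((k : ℝ)⁻¹) ≤ C)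
    (hmg : ∀ N ∈ 𝔐, ∃ M ∈ 𝔐, ∃ C : ℝ, 0 < C ∧
      ∀ k : ℕ, 1 ≤ k → M k / M (k - 1) ≤ C * (N k) ^ ((k : ℝ)⁻¹)) :
    ((∀ N ∈ 𝔐, ∃ M ∈ 𝔐, ∃ C : ℝ, 1 ≤ C ∧ ∀ j k : ℕ, 1 ≤ j → j ≤ k →
        (M j / M (j - 1)) / (j : ℝ) ≤ C * ((N k / N (k - 1)) / (k : ℝ)))
      ↔ (∀ N ∈ 𝔐, ∃ M ∈ 𝔐, ∃ C : ℝ, 0 < C ∧ ∀ j k : ℕ, 1 ≤ j → j ≤ k →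
        (M j / (Nat.factorial j : ℝ)) ^ ((j : ℝ)⁻¹) ≤
          C * (N k / (Nat.factorial k : ℝ)) ^ ((k : ℝ)⁻¹))) := by
  constructor
  · -- (a) → (d)
    intro ha N hN
    obtain ⟨M₁, hM₁, C₀, hC₀, hmg₁⟩ := hmg N hN
    obtain ⟨M, hM, C₁, hC₁, hA⟩ := ha M₁ hM₁
    refine ⟨M, hM, Real.exp 1 * C₁ * C₀, by positivity, ?_⟩
    intro j k hj hjk
    have hk : 1 ≤ k := le_trans hj hjk
    have hWN := h𝔐.2.1 N hN
    have hWM := h𝔐.2.1 M hM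
    have hWM₁ := h𝔐.2.1 M₁ hM₁
    have hkpos : (0 : ℝ) < (k : ℝ) := by exact_mod_cast hk
    have hC₁' : (0 : ℝ) ≤ C₁ := by linarith
    have s1 := lemA hWM hj
    have s2 := hA j k hj hjk
    have s3 := hmg₁ k hk
    have s4 := lemB hWN hk
    have t1 : (M₁ k / M₁ (k - 1)) / (k : ℝ) ≤
        C₀ * (N k / (Nat.factorial k : ℝ)) ^ ((k : ℝ)⁻¹) := by
      rw [div_le_iff₀ hkpos]
      calc M₁ k / M₁ (k - 1) ≤ C₀ * N k ^ ((k : ℝ)⁻¹) := s3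
        _ ≤ C₀ * ((k : ℝ) * (N k / (Nat.factorial k : ℝ)) ^ ((k : ℝ)⁻¹)) :=
            mul_le_mul_of_nonneg_left s4 hC₀.le
        _ = C₀ * (N k / (Nat.factorial k : ℝ)) ^ ((k : ℝ)⁻¹) * (k : ℝ) := by ring
    calc (M j / (Nat.factorial j : ℝ)) ^ ((j : ℝ)⁻¹)
        ≤ Real.exp 1 * ((M j / M (j - 1)) / (j : ℝ)) := s1
      _ ≤ Real.exp 1 * (C₁ * ((M₁ k / M₁ (k - 1)) / (k : ℝ))) :=
          mul_le_mul_of_nonneg_left s2 (Real.exp_pos 1).le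
      _ ≤ Real.exp 1 * (C₁ * (C₀ * (N k / (Nat.factorial k : ℝ)) ^ ((k : ℝ)⁻¹))) :=
          mul_le_mul_of_nonneg_left (mul_le_mul_of_nonneg_left t1 hC₁')
            (Real.exp_pos 1).le
      _ = Real.exp 1 * C₁ * C₀ * (N k / (Nat.factorial k : ℝ)) ^ ((k : ℝ)⁻¹) := by ring
  · -- (d) → (a)
    intro hd N hN
    obtain ⟨L, hL, C₁, hC₁, hD⟩ := hd N hN
    obtain ⟨M, hM, C₂, hC₂, hmg₂⟩ := hmg L hL
    refine ⟨M, hM, max 1 (Real.exp 1 * C₂ * C₁), le_max_left _ _, ?_⟩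
    intro j k hj hjk
    have hk : 1 ≤ k := le_trans hj hjk
    have hWN := h𝔐.2.1 N hN
    have hWL := h𝔐.2.1 L hL
    have hjpos : (0 : ℝ) < (j : ℝ) := by exact_mod_cast hj
    have hkpos : (0 : ℝ) < (k : ℝ) := by exact_mod_cast hk
    have s1 := hmg₂ j hj
    have s2 := lemB hWL hj
    have s3 := hD j k hj hjk
    have s4 := lemA hWN hk
    have t1 : (M j / M (j - 1)) / (j : ℝ) ≤
        C₂ * (L j / (Nat.factorial j : ℝ)) ^ ((j : ℝ)⁻¹) := by
      rw [div_le_iff₀ hjpos]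
      calc M j / M (j - 1) ≤ C₂ * L j ^ ((j : ℝ)⁻¹) := s1
        _ ≤ C₂ * ((j : ℝ) * (L j / (Nat.factorial j : ℝ)) ^ ((j : ℝ)⁻¹)) :=
            mul_le_mul_of_nonneg_left s2 hC₂.le
        _ = C₂ * (L j / (Nat.factorial j : ℝ)) ^ ((j : ℝ)⁻¹) * (j : ℝ) := by ring
    have hνnn : 0 ≤ (N k / N (k - 1)) / (k : ℝ) :=
      div_nonneg (ws_mu_pos hWN k).le hkpos.le
    calc (M j / M (j - 1)) / (j : ℝ)
        ≤ C₂ * (L j / (Nat.factorial j : ℝ)) ^ ((j : ℝ)⁻¹) := t1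
      _ ≤ C₂ * (C₁ * (N k / (Nat.factorial k : ℝ)) ^ ((k : ℝ)⁻¹)) :=
          mul_le_mul_of_nonneg_left s3 hC₂.le
      _ ≤ C₂ * (C₁ * (Real.exp 1 * ((N k / N (k - 1)) / (k : ℝ)))) :=
          mul_le_mul_of_nonneg_left (mul_le_mul_of_nonneg_left s4 hC₁.le) hC₂.le
      _ = (Real.exp 1 * C₂ * C₁) * ((N k / N (k - 1)) / (k : ℝ)) := by ring
      _ ≤ max 1 (Real.exp 1 * C₂ * C₁) * ((N k / N (k - 1)) / (k : ℝ)) :=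
          mul_le_mul_of_nonneg_right (le_max_right _ _) hνnn
end
end

section
/- Let ω be a weight function satisfying ω(t) = o(t) as t → ∞. Then ω is equivalent to a concave weight function if and only if there exist C > 0 and t_0 > 0 such that ω(λt) ≤ C λ ω(t) for all λ ≥ 1 and all t ≥ t_0. -/
open Real Filter MeasureTheory Asymptotics
open scoped BigOperators Topology NNReal ENNReal

noncomputable section

namespace Thm11

variable {ω : ℝ → ℝ} {C x0 : ℝ}

def G (ω : ℝ → ℝ) (x : ℝ) : ℝ := ω (Real.exp x)

def DG (ω : ℝ → ℝ) (y : ℝ) : ℝ := G ω (y + 1) - G ω y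

lemma G_mono (hω : IsWeightFunction ω) : Monotone (G ω) := fun x y h =>
  hω.monotoneOn (Set.mem_Ici.2 (exp_pos x).le) (Set.mem_Ici.2 (exp_pos y).le) (exp_le_exp.2 h)

lemma G_nonneg (hω : IsWeightFunction ω) (x : ℝ) : 0 ≤ G ω x := hω.nonneg _ (exp_pos x).le

lemma G_cont (hω : IsWeightFunction ω) : Continuous (G ω) := by
  rw [continuous_iff_continuousAt]
  intro x
  exact (hω.continuousOn.continuousAt (Ici_mem_nhds (exp_pos x))).comp continuous_exp.continuousAt

lemma DG_nonneg (hω : IsWeightFunction ω) (y : ℝ) : 0 ≤ DG ω y :=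
  sub_nonneg.2 (G_mono hω (by linarith))

lemma DG_le (hω : IsWeightFunction ω) (y : ℝ) : DG ω y ≤ G ω (y + 1) := by
  have := G_nonneg hω y; unfold DG; linarith

lemma DG_mono (hω : IsWeightFunction ω) {y u : ℝ} (hy : 0 ≤ y) (hyu : y ≤ u) :
    DG ω y ≤ DG ω u := by
  rcases eq_or_lt_of_le hyu with rfl | hlt
  · exact le_rfl
  have cv : ConvexOn ℝ (Set.Ici 0) (G ω) := hω.convexOn_comp_exp
  have hu : (0:ℝ) ≤ u := le_trans hy hyu
  have m1 : y ∈ Set.Ici (0:ℝ) := hy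
  have m2 : y + 1 ∈ Set.Ici (0:ℝ) := by simp only [Set.mem_Ici]; linarith
  have m3 : u ∈ Set.Ici (0:ℝ) := hu
  have m4 : u + 1 ∈ Set.Ici (0:ℝ) := by simp only [Set.mem_Ici]; linarith
  have h1 : (G ω (y+1) - G ω y) / ((y+1) - y) ≤ (G ω (u+1) - G ω y) / ((u+1) - y) :=
    cv.secant_mono m1 m2 m4 (by intro h; linarith) (by intro h; linarith) (by linarith)
  have h2 : (G ω y - G ω (u+1)) / (y - (u+1)) ≤ (G ω u - G ω (u+1)) / (u - (u+1)) :=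
    cv.secant_mono m4 m1 m3 (by intro h; linarith) (by intro h; linarith) hyu
  have hd : (0:ℝ) < (u+1) - y := by linarith
  have e1 : (G ω y - G ω (u+1)) / (y - (u+1)) = (G ω (u+1) - G ω y) / ((u+1) - y) := by
    rw [← neg_div_neg_eq]; ring_nf
  have e2 : (G ω u - G ω (u+1)) / (u - (u+1)) = G ω (u+1) - G ω u := by
    have : u - (u+1) = -1 := by ring
    rw [this]; field_simp; ring
  rw [e1, e2] at h2
  have h1' : G ω (y+1) - G ω y ≤ (G ω (u+1) - G ω y) / ((u+1) - y) := by
    have : (y+1) - y = 1 := by ring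
    rwa [this, div_one] at h1
  exact le_trans h1' h2


/-- The density whose primitive (in log scale) will be the concave weight. -/
def g (ω : ℝ → ℝ) (x0 u : ℝ) : ℝ :=
  ⨆ y : Set.Ici x0, DG ω (y : ℝ) * min (Real.exp (u - (y : ℝ))) 1

/-- Abbreviation for the boundedness hypothesis. -/
def GBdd (ω : ℝ → ℝ) (x0 : ℝ) : Prop :=
  ∀ u : ℝ, BddAbove (Set.range fun y : Set.Ici x0 => DG ω (y : ℝ) * min (Real.exp (u - (y : ℝ)) ) 1)

lemma nonempty_Ici : Nonempty (Set.Ici x0) := ⟨⟨x0, Set.self_mem_Ici⟩⟩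

lemma g_bddAbove (hω : IsWeightFunction ω)
    (hb : ∀ x y, x0 ≤ x → x ≤ y → G ω y ≤ C * Real.exp (y - x) * G ω x) :
    GBdd ω x0 := by
  intro u
  refine ⟨C * Real.exp (u + 1 - x0) * G ω x0, ?_⟩
  rintro _ ⟨⟨y, hy⟩, rfl⟩
  simp only
  have h1 : DG ω y * min (Real.exp (u - y)) 1 ≤ G ω (y + 1) * Real.exp (u - y) :=
    mul_le_mul (DG_le hω y) (min_le_left _ _) (le_min (exp_pos _).le zero_le_one)
      (G_nonneg hω _)
  have hy' : x0 ≤ y := hy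
  have h2 : G ω (y + 1) ≤ C * Real.exp (y + 1 - x0) * G ω x0 :=
    hb x0 (y + 1) le_rfl (by linarith)
  calc DG ω y * min (Real.exp (u - y)) 1 ≤ G ω (y + 1) * Real.exp (u - y) := h1
    _ ≤ (C * Real.exp (y + 1 - x0) * G ω x0) * Real.exp (u - y) :=
        mul_le_mul_of_nonneg_right h2 (exp_pos _).le
    _ = C * (Real.exp (y + 1 - x0) * Real.exp (u - y)) * G ω x0 := by ring
    _ = C * Real.exp (u + 1 - x0) * G ω x0 := by
        rw [← Real.exp_add, show y + 1 - x0 + (u - y) = u + 1 - x0 from by ring]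
    
lemma g_le {B : ℝ} (h : ∀ y : ℝ, x0 ≤ y → DG ω y * min (Real.exp (u - y)) 1 ≤ B) :
    g ω x0 u ≤ B := by
  haveI := @nonempty_Ici x0
  exact ciSup_le fun y => h y y.2

lemma le_g (hbd : GBdd ω x0) {y : ℝ} (hy : x0 ≤ y) (u : ℝ) :
    DG ω y * min (Real.exp (u - y)) 1 ≤ g ω x0 u :=
  le_ciSup (hbd u) (⟨y, Set.mem_Ici.2 hy⟩ : Set.Ici x0)

lemma g_nonneg (hω : IsWeightFunction ω) (hbd : GBdd ω x0) (u : ℝ) : 0 ≤ g ω x0 u :=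
  le_trans (mul_nonneg (DG_nonneg hω x0) (le_min (exp_pos _).le zero_le_one)) (le_g hbd le_rfl u)

lemma DG_le_g (hω : IsWeightFunction ω) (hbd : GBdd ω x0) {u : ℝ} (hu : x0 ≤ u) :
    DG ω u ≤ g ω x0 u := by
  have := le_g hbd hu u
  simpa [sub_self, Real.exp_zero] using this

lemma g_mono (hω : IsWeightFunction ω) (hbd : GBdd ω x0) : Monotone (g ω x0) := by
  intro u v huv
  refine g_le fun y hy => le_trans ?_ (le_g hbd hy v)
  exact mul_le_mul_of_nonneg_left
    (min_le_min (exp_le_exp.2 (by linarith)) le_rfl) (DG_nonneg hω y)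

lemma g_exp_le (hω : IsWeightFunction ω) (hbd : GBdd ω x0) {u v : ℝ} (huv : u ≤ v) :
    g ω x0 v ≤ Real.exp (v - u) * g ω x0 u := by
  refine g_le fun y hy => ?_
  have key : DG ω y * min (Real.exp (v - y)) 1
      ≤ Real.exp (v - u) * (DG ω y * min (Real.exp (u - y)) 1) := by
    rw [mul_left_comm]
    refine mul_le_mul_of_nonneg_left ?_ (DG_nonneg hω y)
    rcases le_total (Real.exp (u - y)) 1 with h | h
    · rw [min_eq_left h]
      calc min (Real.exp (v - y)) 1 ≤ Real.exp (v - y) := min_le_left _ _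
        _ = Real.exp (v - u) * Real.exp (u - y) := by rw [← Real.exp_add]; ring_nf
    · rw [min_eq_right h]
      calc min (Real.exp (v - y)) 1 ≤ 1 := min_le_right _ _
        _ ≤ Real.exp (v - u) * 1 := by
            rw [mul_one]; exact Real.one_le_exp (by linarith)
  exact key.trans (mul_le_mul_of_nonneg_left (le_g hbd hy u) (exp_pos _).le)

lemma g_intervalIntegrable (hω : IsWeightFunction ω) (hbd : GBdd ω x0) (a b : ℝ) :
    IntervalIntegrable (g ω x0) volume a b :=
  (g_mono hω hbd).intervalIntegrable

/-- primitive of `g` from `0`. -/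
def Psi (ω : ℝ → ℝ) (x0 x : ℝ) : ℝ := ∫ u in (0:ℝ)..x, g ω x0 u

lemma Psi_sub (hω : IsWeightFunction ω) (hbd : GBdd ω x0) (x y : ℝ) :
    Psi ω x0 y - Psi ω x0 x = ∫ u in x..y, g ω x0 u := by
  have := intervalIntegral.integral_add_adjacent_intervals (g_intervalIntegrable hω hbd 0 x)
    (g_intervalIntegrable hω hbd x y)
  unfold Psi; linarith

lemma Psi_zero : Psi ω x0 0 = 0 := by simp [Psi]

lemma Psi_diff_le_g (hω : IsWeightFunction ω) (hbd : GBdd ω x0) {x y : ℝ} (hxy : x ≤ y) :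
    Psi ω x0 y - Psi ω x0 x ≤ (y - x) * g ω x0 y := by
  rw [Psi_sub hω hbd]
  calc (∫ u in x..y, g ω x0 u) ≤ ∫ _u in x..y, g ω x0 y := by
        refine intervalIntegral.integral_mono_on hxy (g_intervalIntegrable hω hbd x y)
          intervalIntegrable_const fun u hu => g_mono hω hbd hu.2
    _ = (y - x) * g ω x0 y := by simp [smul_eq_mul]
    
lemma Psi_diff_ge_g (hω : IsWeightFunction ω) (hbd : GBdd ω x0) {x y : ℝ} (hxy : x ≤ y) :
    (y - x) * g ω x0 x ≤ Psi ω x0 y - Psi ω x0 x := by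
  rw [Psi_sub hω hbd]
  calc (y - x) * g ω x0 x = ∫ _u in x..y, g ω x0 x := by simp [smul_eq_mul]
    _ ≤ ∫ u in x..y, g ω x0 u := by
        refine intervalIntegral.integral_mono_on hxy intervalIntegrable_const
          (g_intervalIntegrable hω hbd x y) fun u hu => g_mono hω hbd hu.1

lemma Psi_diff_le_exp (hω : IsWeightFunction ω) (hbd : GBdd ω x0) {x y : ℝ} (hxy : x ≤ y) :
    Psi ω x0 y - Psi ω x0 x ≤ (Real.exp y - Real.exp x) * (Real.exp (-x) * g ω x0 x) := by
  rw [Psi_sub hω hbd]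
  calc (∫ u in x..y, g ω x0 u)
      ≤ ∫ u in x..y, Real.exp u * (Real.exp (-x) * g ω x0 x) := by
        refine intervalIntegral.integral_mono_on hxy (g_intervalIntegrable hω hbd x y)
          (by apply Continuous.intervalIntegrable; continuity) fun u hu => ?_
        have := g_exp_le hω hbd hu.1
        calc g ω x0 u ≤ Real.exp (u - x) * g ω x0 x := this
          _ = Real.exp u * (Real.exp (-x) * g ω x0 x) := by rw [← mul_assoc, ← Real.exp_add]; ring_nf
    _ = (Real.exp y - Real.exp x) * (Real.exp (-x) * g ω x0 x) := by
        rw [intervalIntegral.integral_mul_const, integral_exp]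

lemma Psi_diff_ge_exp (hω : IsWeightFunction ω) (hbd : GBdd ω x0) {x y : ℝ} (hxy : x ≤ y) :
    (Real.exp y - Real.exp x) * (Real.exp (-y) * g ω x0 y) ≤ Psi ω x0 y - Psi ω x0 x := by
  rw [Psi_sub hω hbd]
  calc (Real.exp y - Real.exp x) * (Real.exp (-y) * g ω x0 y)
      = ∫ u in x..y, Real.exp u * (Real.exp (-y) * g ω x0 y) := by
        rw [intervalIntegral.integral_mul_const, integral_exp]
    _ ≤ ∫ u in x..y, g ω x0 u := by
        refine intervalIntegral.integral_mono_on hxy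
          (by apply Continuous.intervalIntegrable; continuity)
          (g_intervalIntegrable hω hbd x y) fun u hu => ?_
        have h2 : g ω x0 y ≤ Real.exp (y - u) * g ω x0 u := g_exp_le hω hbd hu.2
        have h3 : Real.exp u * (Real.exp (-y) * g ω x0 y)
            ≤ Real.exp u * (Real.exp (-y) * (Real.exp (y - u) * g ω x0 u)) := by
          refine mul_le_mul_of_nonneg_left (mul_le_mul_of_nonneg_left h2 (exp_pos _).le) (exp_pos _).le
        refine h3.trans (le_of_eq ?_)
        rw [show Real.exp u * (Real.exp (-y) * (Real.exp (y - u) * g ω x0 u))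
            = (Real.exp u * Real.exp (-y) * Real.exp (y - u)) * g ω x0 u from by ring,
          ← Real.exp_add, ← Real.exp_add, show u + -y + (y - u) = 0 from by ring,
          Real.exp_zero, one_mul]


/-- The concave weight function. -/
def Sig (ω : ℝ → ℝ) (x0 t : ℝ) : ℝ :=
  g ω x0 0 * min t 1 + Psi ω x0 (Real.log (max t 1))

/-- Slope majorant of `Sig`. -/
def Hf (ω : ℝ → ℝ) (x0 t : ℝ) : ℝ :=
  Real.exp (-(Real.log (max t 1))) * g ω x0 (Real.log (max t 1))

lemma log_max_nonneg (t : ℝ) : 0 ≤ Real.log (max t 1) :=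
  Real.log_nonneg (le_max_right _ _)

lemma exp_log_max (t : ℝ) : Real.exp (Real.log (max t 1)) = max t 1 :=
  Real.exp_log (lt_of_lt_of_le one_pos (le_max_right _ _))

lemma Hf_nonneg (hω : IsWeightFunction ω) (hbd : GBdd ω x0) (t : ℝ) : 0 ≤ Hf ω x0 t :=
  mul_nonneg (exp_pos _).le (g_nonneg hω hbd _)

lemma Hf_le (hω : IsWeightFunction ω) (hbd : GBdd ω x0) {t1 t2 : ℝ} (h : t1 ≤ t2) :
    Hf ω x0 t2 ≤ Hf ω x0 t1 := by
  set u1 := Real.log (max t1 1)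
  set u2 := Real.log (max t2 1)
  have hu : u1 ≤ u2 := Real.log_le_log (lt_of_lt_of_le one_pos (le_max_right _ _))
    (max_le_max h le_rfl)
  have h1 : g ω x0 u2 ≤ Real.exp (u2 - u1) * g ω x0 u1 := g_exp_le hω hbd hu
  have h2 : Real.exp (-u2) * g ω x0 u2 ≤ Real.exp (-u2) * (Real.exp (u2 - u1) * g ω x0 u1) :=
    mul_le_mul_of_nonneg_left h1 (exp_pos _).le
  calc Hf ω x0 t2 = Real.exp (-u2) * g ω x0 u2 := rfl
    _ ≤ Real.exp (-u2) * (Real.exp (u2 - u1) * g ω x0 u1) := h2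
    _ = (Real.exp (-u2) * Real.exp (u2 - u1)) * g ω x0 u1 := by ring
    _ = Hf ω x0 t1 := by
        rw [← Real.exp_add, show -u2 + (u2 - u1) = -u1 from by ring]; rfl

lemma Hf_le_a (hω : IsWeightFunction ω) (hbd : GBdd ω x0) (t : ℝ) :
    Hf ω x0 t ≤ g ω x0 0 := by
  have h0 : Hf ω x0 0 = g ω x0 0 := by
    unfold Hf
    rw [max_eq_right zero_le_one, Real.log_one, neg_zero, Real.exp_zero, one_mul]
  rcases le_total 0 t with h | h
  · rw [← h0]; exact Hf_le hω hbd h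
  · rw [← h0]
    unfold Hf
    rw [show max t 1 = 1 from max_eq_right (le_trans h zero_le_one),
      max_eq_right zero_le_one]

lemma Hf_one_of_le {t : ℝ} (h : t ≤ 1) : Hf ω x0 t = g ω x0 0 := by
  unfold Hf
  rw [max_eq_right h, Real.log_one, neg_zero, Real.exp_zero, one_mul]

lemma sig_diff_le (hω : IsWeightFunction ω) (hbd : GBdd ω x0) {t1 t2 : ℝ}
    (h12 : t1 ≤ t2) : Sig ω x0 t2 - Sig ω x0 t1 ≤ Hf ω x0 t1 * (t2 - t1) := by
  set a := g ω x0 0 with ha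
  set u1 := Real.log (max t1 1)
  set u2 := Real.log (max t2 1)
  have hu : u1 ≤ u2 := Real.log_le_log (lt_of_lt_of_le one_pos (le_max_right _ _))
    (max_le_max h12 le_rfl)
  have hpsi : Psi ω x0 u2 - Psi ω x0 u1 ≤ (max t2 1 - max t1 1) * Hf ω x0 t1 := by
    have := Psi_diff_le_exp hω hbd hu
    rwa [exp_log_max, exp_log_max] at this
  have hmm1 := min_add_max t1 1
  have hmm2 := min_add_max t2 1
  have hminle : min t1 1 ≤ min t2 1 := min_le_min h12 le_rfl
  have key : a * (min t2 1 - min t1 1) ≤ Hf ω x0 t1 * (min t2 1 - min t1 1) := by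
    rcases le_or_gt 1 t1 with h1 | h1
    · have e1 : min t1 1 = 1 := min_eq_right h1
      have e2 : min t2 1 = 1 := min_eq_right (le_trans h1 h12)
      rw [e1, e2]; simp
    · rw [Hf_one_of_le h1.le, ← ha]
  have expand : Sig ω x0 t2 - Sig ω x0 t1
      = a * (min t2 1 - min t1 1) + (Psi ω x0 u2 - Psi ω x0 u1) := by
    unfold Sig; ring
  rw [expand]
  calc a * (min t2 1 - min t1 1) + (Psi ω x0 u2 - Psi ω x0 u1)
      ≤ Hf ω x0 t1 * (min t2 1 - min t1 1) + (max t2 1 - max t1 1) * Hf ω x0 t1 :=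
        add_le_add key hpsi
    _ = Hf ω x0 t1 * ((min t2 1 + max t2 1) - (min t1 1 + max t1 1)) := by ring
    _ = Hf ω x0 t1 * (t2 - t1) := by rw [hmm1, hmm2]; ring_nf

lemma sig_diff_ge (hω : IsWeightFunction ω) (hbd : GBdd ω x0) {t1 t2 : ℝ}
    (h12 : t1 ≤ t2) : Hf ω x0 t2 * (t2 - t1) ≤ Sig ω x0 t2 - Sig ω x0 t1 := by
  set a := g ω x0 0 with ha
  set u1 := Real.log (max t1 1)
  set u2 := Real.log (max t2 1)
  have hu : u1 ≤ u2 := Real.log_le_log (lt_of_lt_of_le one_pos (le_max_right _ _))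
    (max_le_max h12 le_rfl)
  have hpsi : (max t2 1 - max t1 1) * Hf ω x0 t2 ≤ Psi ω x0 u2 - Psi ω x0 u1 := by
    have := Psi_diff_ge_exp hω hbd hu
    rwa [exp_log_max, exp_log_max] at this
  have hmm1 := min_add_max t1 1
  have hmm2 := min_add_max t2 1
  have hminle : min t1 1 ≤ min t2 1 := min_le_min h12 le_rfl
  have key : Hf ω x0 t2 * (min t2 1 - min t1 1) ≤ a * (min t2 1 - min t1 1) :=
    mul_le_mul_of_nonneg_right (Hf_le_a hω hbd t2) (by linarith)
  have expand : Sig ω x0 t2 - Sig ω x0 t1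
      = a * (min t2 1 - min t1 1) + (Psi ω x0 u2 - Psi ω x0 u1) := by
    unfold Sig; ring
  rw [expand]
  calc Hf ω x0 t2 * (t2 - t1)
      = Hf ω x0 t2 * (min t2 1 - min t1 1) + (max t2 1 - max t1 1) * Hf ω x0 t2 := by
        rw [show (t2 : ℝ) - t1 = (min t2 1 + max t2 1) - (min t1 1 + max t1 1) from by
          rw [hmm1, hmm2]; ring]
        ring
    _ ≤ a * (min t2 1 - min t1 1) + (Psi ω x0 u2 - Psi ω x0 u1) := add_le_add key hpsi

lemma sig_mono (hω : IsWeightFunction ω) (hbd : GBdd ω x0) {t1 t2 : ℝ} (h12 : t1 ≤ t2) :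
    Sig ω x0 t1 ≤ Sig ω x0 t2 := by
  have h1 := sig_diff_ge hω hbd h12
  have h2 : 0 ≤ Hf ω x0 t2 * (t2 - t1) :=
    mul_nonneg (Hf_nonneg hω hbd t2) (by linarith)
  linarith

lemma sig_zero : Sig ω x0 0 = 0 := by
  unfold Sig
  rw [min_eq_left zero_le_one, max_eq_right zero_le_one, Real.log_one, Psi_zero]
  ring

lemma sig_concave (hω : IsWeightFunction ω) (hbd : GBdd ω x0) :
    ConcaveOn ℝ (Set.Ici 0) (Sig ω x0) := by
  refine concaveOn_iff_slope_anti_adjacent.2 ⟨convex_Ici 0, ?_⟩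
  intro x y z hx hz hxy hyz
  have h1 : Hf ω x0 y * (y - x) ≤ Sig ω x0 y - Sig ω x0 x := sig_diff_ge hω hbd hxy.le
  have h2 : Sig ω x0 z - Sig ω x0 y ≤ Hf ω x0 y * (z - y) := sig_diff_le hω hbd hyz.le
  have hxy' : (0:ℝ) < y - x := by linarith
  have hyz' : (0:ℝ) < z - y := by linarith
  have l1 : (Sig ω x0 z - Sig ω x0 y) / (z - y) ≤ Hf ω x0 y := by
    rw [div_le_iff₀ hyz']; linarith
  have l2 : Hf ω x0 y ≤ (Sig ω x0 y - Sig ω x0 x) / (y - x) := by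
    rw [le_div_iff₀ hxy']; linarith
  linarith

lemma sig_exp (x : ℝ) (hx : 0 ≤ x) :
    Sig ω x0 (Real.exp x) = g ω x0 0 + Psi ω x0 x := by
  unfold Sig
  rw [min_eq_right (Real.one_le_exp hx), max_eq_left (Real.one_le_exp hx), Real.log_exp, mul_one]

lemma sig_comp_exp_convex (hω : IsWeightFunction ω) (hbd : GBdd ω x0) :
    ConvexOn ℝ (Set.Ici 0) (fun x => Sig ω x0 (Real.exp x)) := by
  refine convexOn_iff_slope_mono_adjacent.2 ⟨convex_Ici 0, ?_⟩
  intro x y z hx hz hxy hyz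
  have hy : (0:ℝ) ≤ y := le_trans hx hxy.le
  rw [sig_exp x hx, sig_exp y hy, sig_exp z (le_trans hy hyz.le)]
  have h1 : Psi ω x0 y - Psi ω x0 x ≤ (y - x) * g ω x0 y := Psi_diff_le_g hω hbd hxy.le
  have h2 : (z - y) * g ω x0 y ≤ Psi ω x0 z - Psi ω x0 y := Psi_diff_ge_g hω hbd hyz.le
  have hxy' : (0:ℝ) < y - x := by linarith
  have hyz' : (0:ℝ) < z - y := by linarith
  have l1 : (g ω x0 0 + Psi ω x0 y - (g ω x0 0 + Psi ω x0 x)) / (y - x) ≤ g ω x0 y := by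
    rw [div_le_iff₀ hxy']; linarith
  have l2 : g ω x0 y ≤ (g ω x0 0 + Psi ω x0 z - (g ω x0 0 + Psi ω x0 y)) / (z - y) := by
    rw [le_div_iff₀ hyz']; linarith
  linarith

lemma Psi_nonneg (hω : IsWeightFunction ω) (hbd : GBdd ω x0) {x : ℝ} (hx : 0 ≤ x) :
    0 ≤ Psi ω x0 x := by
  have := Psi_diff_ge_g hω hbd hx
  rw [Psi_zero] at this
  have h2 : 0 ≤ (x - 0) * g ω x0 0 := mul_nonneg (by linarith) (g_nonneg hω hbd 0)
  linarith

lemma sig_nonneg (hω : IsWeightFunction ω) (hbd : GBdd ω x0) {t : ℝ} (ht : 0 ≤ t) :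
    0 ≤ Sig ω x0 t := by
  rw [← sig_zero (ω := ω) (x0 := x0)]
  exact sig_mono hω hbd ht

lemma sig_continuousOn (hω : IsWeightFunction ω) (hbd : GBdd ω x0) :
    ContinuousOn (Sig ω x0) (Set.Ici 0) := by
  refine LipschitzOnWith.continuousOn (K := Real.toNNReal (g ω x0 0)) ?_
  refine LipschitzOnWith.of_dist_le_mul fun s hs t ht => ?_
  rw [Real.dist_eq, Real.dist_eq, Real.coe_toNNReal _ (g_nonneg hω hbd 0)]
  rcases le_total s t with h | h
  · have h1 := sig_diff_le hω hbd h
    have h2 := sig_diff_ge hω hbd h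
    have h3 : 0 ≤ Hf ω x0 t * (t - s) := mul_nonneg (Hf_nonneg hω hbd t) (by linarith)
    have h4 : Hf ω x0 s * (t - s) ≤ g ω x0 0 * (t - s) :=
      mul_le_mul_of_nonneg_right (Hf_le_a hω hbd s) (by linarith)
    rw [abs_sub_comm (Sig ω x0 s), abs_sub_comm s,
      abs_of_nonneg (by linarith : (0:ℝ) ≤ Sig ω x0 t - Sig ω x0 s),
      abs_of_nonneg (by linarith : (0:ℝ) ≤ t - s)]
    linarith
  · have h1 := sig_diff_le hω hbd h
    have h2 := sig_diff_ge hω hbd h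
    have h3 : 0 ≤ Hf ω x0 s * (s - t) := mul_nonneg (Hf_nonneg hω hbd s) (by linarith)
    have h4 : Hf ω x0 t * (s - t) ≤ g ω x0 0 * (s - t) :=
      mul_le_mul_of_nonneg_right (Hf_le_a hω hbd t) (by linarith)
    rw [abs_of_nonneg (by linarith), abs_of_nonneg (by linarith)]
    linarith


lemma DG_cont (hω : IsWeightFunction ω) : Continuous (DG ω) := by
  unfold DG
  exact ((G_cont hω).comp (by continuity)).sub (G_cont hω)

lemma Psi_lower (hω : IsWeightFunction ω) (hbd : GBdd ω x0) (hx0 : 1 ≤ x0)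
    {x : ℝ} (hx : x0 ≤ x) : G ω x - G ω (x0 + 1) ≤ Psi ω x0 x := by
  have hGi : ∀ a b : ℝ, IntervalIntegrable (G ω) volume a b :=
    fun a b => (G_cont hω).intervalIntegrable a b
  have h0 : 0 ≤ Psi ω x0 x0 := Psi_nonneg hω hbd (by linarith)
  have hsub : Psi ω x0 x - Psi ω x0 x0 = ∫ u in x0..x, g ω x0 u := Psi_sub hω hbd x0 x
  have hDG : (∫ u in x0..x, DG ω u) ≤ ∫ u in x0..x, g ω x0 u := by
    refine intervalIntegral.integral_mono_on hx ((DG_cont hω).intervalIntegrable x0 x)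
      (g_intervalIntegrable hω hbd x0 x) fun u hu => DG_le_g hω hbd hu.1
  have e1 : (∫ u in x0..x, G ω (u + 1)) = ∫ u in (x0 + 1)..(x + 1), G ω u :=
    intervalIntegral.integral_comp_add_right (G ω) 1
  have hc1 : Continuous fun u : ℝ => G ω (u + 1) := (G_cont hω).comp (continuous_add_right 1)
  have e2 : (∫ u in x0..x, DG ω u)
      = (∫ u in (x0 + 1)..(x + 1), G ω u) - ∫ u in x0..x, G ω u := by
    unfold DG
    rw [intervalIntegral.integral_sub (hc1.intervalIntegrable x0 x) (hGi x0 x)]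
    rw [← e1]
  have a1 : (∫ u in x0..(x0 + 1), G ω u) + (∫ u in (x0 + 1)..(x + 1), G ω u)
      = ∫ u in x0..(x + 1), G ω u := intervalIntegral.integral_add_adjacent_intervals (hGi _ _) (hGi _ _)
  have a2 : (∫ u in x0..x, G ω u) + (∫ u in x..(x + 1), G ω u)
      = ∫ u in x0..(x + 1), G ω u := intervalIntegral.integral_add_adjacent_intervals (hGi _ _) (hGi _ _)
  have b1 : G ω x ≤ ∫ u in x..(x + 1), G ω u := by
    have : (∫ _u in x..(x + 1), G ω x) ≤ ∫ u in x..(x + 1), G ω u := by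
      refine intervalIntegral.integral_mono_on (by linarith) intervalIntegrable_const (hGi _ _)
        fun u hu => G_mono hω hu.1
    simpa using this
  have b2 : (∫ u in x0..(x0 + 1), G ω u) ≤ G ω (x0 + 1) := by
    have : (∫ u in x0..(x0 + 1), G ω u) ≤ ∫ _u in x0..(x0 + 1), G ω (x0 + 1) := by
      refine intervalIntegral.integral_mono_on (by linarith) (hGi _ _) intervalIntegrable_const
        fun u hu => G_mono hω hu.2
    simpa using this
  linarith

lemma geom_aux (N m : ℕ) :
    (∑ j ∈ Finset.range N, if j ≤ m then Real.exp ((j:ℝ) - m) else 0) ≤ 2 := by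
  have hterm : ∀ j : ℕ, (if j ≤ m then Real.exp ((j:ℝ) - m) else 0)
      ≤ (if j ≤ m then ((2:ℝ)⁻¹) ^ (m - j) else 0) := by
    intro j
    by_cases hj : j ≤ m
    · rw [if_pos hj, if_pos hj]
      have e1 : ((j:ℝ) - m) = -(((m - j : ℕ) : ℝ)) := by
        rw [Nat.cast_sub hj]; ring
      rw [e1, Real.exp_neg]
      have e2 : Real.exp (((m - j : ℕ) : ℝ)) = Real.exp 1 ^ (m - j) := by
        rw [← Real.exp_nat_mul]; ring_nf
      rw [e2, ← inv_pow]
      refine pow_le_pow_left₀ (by positivity) ?_ _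
      rw [inv_le_inv₀ (exp_pos 1) two_pos]
      have := Real.add_one_le_exp 1
      linarith
    · rw [if_neg hj, if_neg hj]
  have h1 : (∑ j ∈ Finset.range N, if j ≤ m then Real.exp ((j:ℝ) - m) else 0)
      ≤ ∑ j ∈ Finset.range N, (if j ≤ m then ((2:ℝ)⁻¹) ^ (m - j) else 0) :=
    Finset.sum_le_sum fun j _ => hterm j
  refine h1.trans ?_
  set M := max N (m + 1) with hM
  have h2 : (∑ j ∈ Finset.range N, if j ≤ m then ((2:ℝ)⁻¹) ^ (m - j) else 0)
      ≤ ∑ j ∈ Finset.range M, (if j ≤ m then ((2:ℝ)⁻¹) ^ (m - j) else 0) := by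
    refine Finset.sum_le_sum_of_subset_of_nonneg
      (Finset.range_subset_range.2 (le_max_left _ _)) fun j _ _ => ?_
    split <;> positivity
  refine h2.trans ?_
  have h3 : (∑ j ∈ Finset.range M, if j ≤ m then ((2:ℝ)⁻¹) ^ (m - j) else 0)
      = ∑ j ∈ Finset.range (m + 1), (if j ≤ m then ((2:ℝ)⁻¹) ^ (m - j) else 0) := by
    refine (Finset.sum_subset (Finset.range_subset_range.2 (le_max_right _ _)) ?_).symm
    intro j _ hj
    rw [Finset.mem_range, not_lt] at hj
    rw [if_neg (by omega)]
  rw [h3]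
  have h4 : (∑ j ∈ Finset.range (m + 1), if j ≤ m then ((2:ℝ)⁻¹) ^ (m - j) else 0)
      = ∑ j ∈ Finset.range (m + 1), ((2:ℝ)⁻¹) ^ (m - j) := by
    refine Finset.sum_congr rfl fun j hj => ?_
    rw [Finset.mem_range] at hj
    rw [if_pos (by omega)]
  rw [h4]
  have h5 : (∑ j ∈ Finset.range (m + 1), ((2:ℝ)⁻¹) ^ (m - j))
      = ∑ j ∈ Finset.range (m + 1), ((2:ℝ)⁻¹) ^ j := by
    have := Finset.sum_range_reflect (fun j => ((2:ℝ)⁻¹) ^ j) (m + 1)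
    rw [← this]
    refine Finset.sum_congr rfl fun j hj => ?_
    rw [Finset.mem_range] at hj
    rw [show m + 1 - 1 - j = m - j from by omega]
  rw [h5, geom_sum_eq (by norm_num)]
  have h6 : (0:ℝ) ≤ (2:ℝ)⁻¹ ^ (m + 1) := by positivity
  rw [show ((2:ℝ)⁻¹ - 1) = -(2⁻¹) from by norm_num, div_neg, div_eq_mul_inv]
  norm_num
  linarith


lemma Psi_upper (hω : IsWeightFunction ω) (hbd : GBdd ω x0) (hC : 1 ≤ C) (hx0 : 1 ≤ x0)
    (hb : ∀ x y, x0 ≤ x → x ≤ y → G ω y ≤ C * Real.exp (y - x) * G ω x)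
    {x : ℝ} (hx : x0 ≤ x) : Psi ω x0 x ≤ 12 * C * G ω (x + 4) := by
  have he1pos : (0:ℝ) < Real.exp 1 := exp_pos 1
  have he13 : Real.exp 1 ≤ 3 := by
    have := Real.exp_one_lt_d9; linarith
  have he11 : (1:ℝ) ≤ Real.exp 1 := Real.one_le_exp zero_le_one
  have hxpos : (0:ℝ) ≤ x := by linarith
  set N := ⌈x⌉₊ with hN
  have hxN : x ≤ (N:ℝ) := Nat.le_ceil x
  have hNx : (N:ℝ) ≤ x + 1 := (Nat.ceil_lt_add_one hxpos).le
  have s1 : Psi ω x0 x ≤ Psi ω x0 (N:ℝ) := by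
    have h := Psi_diff_ge_g hω hbd hxN
    have h2 : 0 ≤ ((N:ℝ) - x) * g ω x0 x :=
      mul_nonneg (by linarith) (g_nonneg hω hbd x)
    linarith
  have s2 : Psi ω x0 (N:ℝ) ≤ ∑ j ∈ Finset.range N, g ω x0 ((j:ℝ) + 1) := by
    have hsum : (∑ k ∈ Finset.range N, ∫ u in ((k:ℕ):ℝ)..((k+1:ℕ):ℝ), g ω x0 u)
        = ∫ u in ((0:ℕ):ℝ)..((N:ℕ):ℝ), g ω x0 u :=
      intervalIntegral.sum_integral_adjacent_intervals fun k _ =>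
        g_intervalIntegrable hω hbd _ _
    have e0 : Psi ω x0 (N:ℝ) = ∑ k ∈ Finset.range N, ∫ u in ((k:ℕ):ℝ)..((k+1:ℕ):ℝ), g ω x0 u := by
      rw [hsum]; norm_num [Psi]
    rw [e0]
    refine Finset.sum_le_sum fun j _ => ?_
    have hle : ((j:ℕ):ℝ) ≤ ((j+1:ℕ):ℝ) := by push_cast; linarith
    calc (∫ u in ((j:ℕ):ℝ)..((j+1:ℕ):ℝ), g ω x0 u)
        ≤ ∫ _u in ((j:ℕ):ℝ)..((j+1:ℕ):ℝ), g ω x0 ((j:ℝ)+1) := by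
          refine intervalIntegral.integral_mono_on hle (g_intervalIntegrable hω hbd _ _)
            intervalIntegrable_const fun u hu => g_mono hω hbd (by
              have := hu.2; push_cast at this ⊢; linarith)
      _ = g ω x0 ((j:ℝ)+1) := by push_cast; simp
  have s3 : ∀ j ∈ Finset.range N, g ω x0 ((j:ℝ) + 1)
      ≤ Real.exp 1 * (∑ m ∈ Finset.range (N+2),
          (if j ≤ m then Real.exp ((j:ℝ) - (m:ℝ)) else 0) * DG ω ((m:ℝ)+1))
        + Real.exp ((j:ℝ) - (N:ℝ)) * (C * Real.exp 1 * G ω ((N:ℝ)+1)) := by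
    intro j hj
    rw [Finset.mem_range] at hj
    have hsum_nonneg : 0 ≤ ∑ m ∈ Finset.range (N+2),
        (if j ≤ m then Real.exp ((j:ℝ) - (m:ℝ)) else 0) * DG ω ((m:ℝ)+1) := by
      refine Finset.sum_nonneg fun m _ => mul_nonneg ?_ (DG_nonneg hω _)
      split <;> positivity
    have htail_nonneg : 0 ≤ Real.exp ((j:ℝ) - (N:ℝ)) * (C * Real.exp 1 * G ω ((N:ℝ)+1)) := by
      have := G_nonneg hω ((N:ℝ)+1); positivity
    refine g_le fun y hy => ?_
    have hy0 : (0:ℝ) ≤ y := by linarith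
    have hminnn : 0 ≤ min (Real.exp ((j:ℝ) + 1 - y)) 1 := le_min (exp_pos _).le zero_le_one
    rcases lt_or_ge y ((N:ℝ)+2) with hyN | hyN
    · set m : ℕ := max (⌊y⌋₊) j with hm
      have hjm : j ≤ m := le_max_right _ _
      have hym : y ≤ (m:ℝ)+1 := by
        have h1 : y < (⌊y⌋₊:ℝ)+1 := Nat.lt_floor_add_one y
        have h2 : ((⌊y⌋₊:ℕ):ℝ) ≤ ((m:ℕ):ℝ) := Nat.cast_le.2 (le_max_left _ _)
        linarith
      have hmN : m < N + 2 := by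
        have h1 : ⌊y⌋₊ < N + 2 := by
          rw [Nat.floor_lt hy0]; push_cast; linarith
        omega
      have hminle : min (Real.exp ((j:ℝ) + 1 - y)) 1 ≤ Real.exp 1 * Real.exp ((j:ℝ) - (m:ℝ)) := by
        by_cases hcase : j ≤ ⌊y⌋₊
        · have hme : (⌊y⌋₊:ℝ) ≤ y := Nat.floor_le hy0
          have hmy : (m:ℝ) ≤ y := by
            rw [hm]; push_cast [max_eq_left hcase] at hme ⊢; exact hme
          calc min (Real.exp ((j:ℝ) + 1 - y)) 1 ≤ Real.exp ((j:ℝ) + 1 - y) := min_le_left _ _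
            _ ≤ Real.exp ((j:ℝ) + 1 - (m:ℝ)) := exp_le_exp.2 (by linarith)
            _ = Real.exp 1 * Real.exp ((j:ℝ) - (m:ℝ)) := by
                rw [← Real.exp_add]; ring_nf
        · calc min (Real.exp ((j:ℝ) + 1 - y)) 1 ≤ 1 := min_le_right _ _
            _ ≤ Real.exp 1 * Real.exp ((j:ℝ) - (m:ℝ)) := by
                have hme : m = j := max_eq_right (le_of_not_ge hcase)
                rw [hme, sub_self, Real.exp_zero, mul_one]; exact he11
      have hDGy : DG ω y ≤ DG ω ((m:ℝ)+1) := DG_mono hω hy0 hym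
      have hterm : DG ω y * min (Real.exp ((j:ℝ) + 1 - y)) 1
          ≤ Real.exp 1 * (Real.exp ((j:ℝ) - (m:ℝ)) * DG ω ((m:ℝ)+1)) := by
        calc DG ω y * min (Real.exp ((j:ℝ) + 1 - y)) 1
            ≤ DG ω ((m:ℝ)+1) * (Real.exp 1 * Real.exp ((j:ℝ) - (m:ℝ))) :=
              mul_le_mul hDGy hminle hminnn (DG_nonneg hω _)
          _ = Real.exp 1 * (Real.exp ((j:ℝ) - (m:ℝ)) * DG ω ((m:ℝ)+1)) := by ring
      have hsingle : Real.exp ((j:ℝ) - (m:ℝ)) * DG ω ((m:ℝ)+1)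
          ≤ ∑ m' ∈ Finset.range (N+2),
            (if j ≤ m' then Real.exp ((j:ℝ) - (m':ℝ)) else 0) * DG ω ((m':ℝ)+1) := by
        have hmem : m ∈ Finset.range (N+2) := Finset.mem_range.2 hmN
        have := Finset.single_le_sum (f := fun m' =>
          (if j ≤ m' then Real.exp ((j:ℝ) - (m':ℝ)) else 0) * DG ω ((m':ℝ)+1))
          (fun m' _ => by
            refine mul_nonneg ?_ (DG_nonneg hω _)
            split <;> positivity) hmem
        simpa only [if_pos hjm] using this
      calc DG ω y * min (Real.exp ((j:ℝ) + 1 - y)) 1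
          ≤ Real.exp 1 * (Real.exp ((j:ℝ) - (m:ℝ)) * DG ω ((m:ℝ)+1)) := hterm
        _ ≤ Real.exp 1 * ∑ m' ∈ Finset.range (N+2),
              (if j ≤ m' then Real.exp ((j:ℝ) - (m':ℝ)) else 0) * DG ω ((m':ℝ)+1) :=
            mul_le_mul_of_nonneg_left hsingle he1pos.le
        _ ≤ _ := le_add_of_nonneg_right htail_nonneg
    · have h1 : DG ω y * min (Real.exp ((j:ℝ) + 1 - y)) 1 ≤ G ω (y+1) * Real.exp ((j:ℝ) + 1 - y) :=
        mul_le_mul (DG_le hω y) (min_le_left _ _) hminnn (G_nonneg hω _)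
      have hx0N : x0 ≤ (N:ℝ)+1 := by linarith
      have h2 : G ω (y+1) ≤ C * Real.exp ((y+1) - ((N:ℝ)+1)) * G ω ((N:ℝ)+1) :=
        hb _ _ hx0N (by linarith)
      have h3 : G ω (y+1) * Real.exp ((j:ℝ) + 1 - y)
          ≤ (C * Real.exp ((y+1) - ((N:ℝ)+1)) * G ω ((N:ℝ)+1)) * Real.exp ((j:ℝ) + 1 - y) :=
        mul_le_mul_of_nonneg_right h2 (exp_pos _).le
      have h4 : (C * Real.exp ((y+1) - ((N:ℝ)+1)) * G ω ((N:ℝ)+1)) * Real.exp ((j:ℝ) + 1 - y)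
          = Real.exp ((j:ℝ) - (N:ℝ)) * (C * Real.exp 1 * G ω ((N:ℝ)+1)) := by
        rw [show (C * Real.exp ((y+1) - ((N:ℝ)+1)) * G ω ((N:ℝ)+1)) * Real.exp ((j:ℝ) + 1 - y)
            = (Real.exp ((y+1) - ((N:ℝ)+1)) * Real.exp ((j:ℝ) + 1 - y)) * (C * G ω ((N:ℝ)+1))
            from by ring, ← Real.exp_add,
          show (y+1) - ((N:ℝ)+1) + ((j:ℝ) + 1 - y) = ((j:ℝ) - (N:ℝ)) + 1 from by ring,
          Real.exp_add]
        ring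
      refine le_trans (le_trans h1 (le_trans h3 (le_of_eq h4))) ?_
      exact le_add_of_nonneg_left (mul_nonneg he1pos.le hsum_nonneg)
  have s4 : (∑ j ∈ Finset.range N, g ω x0 ((j:ℝ) + 1))
      ≤ Real.exp 1 * (2 * G ω ((N:ℝ)+3)) + 2 * (C * Real.exp 1 * G ω ((N:ℝ)+1)) := by
    have hstep := Finset.sum_le_sum s3
    refine hstep.trans ?_
    rw [Finset.sum_add_distrib, ← Finset.mul_sum, ← Finset.sum_mul]
    have hA : (∑ j ∈ Finset.range N, ∑ m ∈ Finset.range (N+2),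
        (if j ≤ m then Real.exp ((j:ℝ) - (m:ℝ)) else 0) * DG ω ((m:ℝ)+1))
        ≤ 2 * G ω ((N:ℝ)+3) := by
      rw [Finset.sum_comm]
      have hper : ∀ m ∈ Finset.range (N+2),
          (∑ j ∈ Finset.range N, (if j ≤ m then Real.exp ((j:ℝ) - (m:ℝ)) else 0) * DG ω ((m:ℝ)+1))
          ≤ 2 * DG ω ((m:ℝ)+1) := by
        intro m _
        rw [← Finset.sum_mul]
        exact mul_le_mul_of_nonneg_right (geom_aux N m) (DG_nonneg hω _)
      refine (Finset.sum_le_sum hper).trans ?_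
      rw [← Finset.mul_sum]
      have htele : (∑ m ∈ Finset.range (N+2), DG ω ((m:ℝ)+1))
          = G ω (((N+2:ℕ):ℝ)+1) - G ω (((0:ℕ):ℝ)+1) := by
        rw [← Finset.sum_range_sub (fun m : ℕ => G ω ((m:ℝ)+1)) (N+2)]
        refine Finset.sum_congr rfl fun m _ => ?_
        unfold DG
        push_cast
        ring_nf
      rw [htele]
      have h1 : G ω (((N+2:ℕ):ℝ)+1) = G ω ((N:ℝ)+3) := by push_cast; ring_nf
      have h2 : 0 ≤ G ω (((0:ℕ):ℝ)+1) := G_nonneg hω _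
      rw [h1]
      linarith
    have hB : (∑ j ∈ Finset.range N, Real.exp ((j:ℝ) - (N:ℝ))) ≤ 2 := by
      have heq : (∑ j ∈ Finset.range N, Real.exp ((j:ℝ) - (N:ℝ)))
          = ∑ j ∈ Finset.range N, (if j ≤ N then Real.exp ((j:ℝ) - (N:ℝ)) else 0) := by
        refine Finset.sum_congr rfl fun j hj => ?_
        rw [Finset.mem_range] at hj
        rw [if_pos (by omega)]
      rw [heq]
      exact geom_aux N N
    have hG1nn : 0 ≤ C * Real.exp 1 * G ω ((N:ℝ)+1) := by
      have := G_nonneg hω ((N:ℝ)+1); positivity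
    have := mul_le_mul_of_nonneg_right hB hG1nn
    have := mul_le_mul_of_nonneg_left hA he1pos.le
    linarith
  have hmono3 : G ω ((N:ℝ)+3) ≤ G ω (x+4) := G_mono hω (by linarith)
  have hmono1 : G ω ((N:ℝ)+1) ≤ G ω (x+4) := G_mono hω (by linarith)
  have hGnn : 0 ≤ G ω (x+4) := G_nonneg hω _
  have hfin : Real.exp 1 * (2 * G ω ((N:ℝ)+3)) + 2 * (C * Real.exp 1 * G ω ((N:ℝ)+1))
      ≤ 12 * C * G ω (x+4) := by
    have k1 : Real.exp 1 * (2 * G ω ((N:ℝ)+3)) ≤ 6 * G ω (x+4) := by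
      nlinarith [G_nonneg hω ((N:ℝ)+3)]
    have kk : Real.exp 1 * G ω ((N:ℝ)+1) ≤ 3 * G ω (x+4) := by
      nlinarith [G_nonneg hω ((N:ℝ)+1)]
    have kk2 : C * (Real.exp 1 * G ω ((N:ℝ)+1)) ≤ C * (3 * G ω (x+4)) :=
      mul_le_mul_of_nonneg_left kk (by linarith)
    have k2 : 2 * (C * Real.exp 1 * G ω ((N:ℝ)+1)) ≤ 6 * C * G ω (x+4) := by nlinarith [kk2]
    have k3 : 6 * G ω (x+4) ≤ 6 * C * G ω (x+4) := by nlinarith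
    linarith
  linarith



theorem construction (hω : IsWeightFunction ω) {t0 : ℝ} (hC : 1 ≤ C) (ht0 : 0 < t0)
    (hb : ∀ l : ℝ, 1 ≤ l → ∀ t : ℝ, t0 ≤ t → ω (l * t) ≤ C * l * ω t) :
    ∃ σ : ℝ → ℝ, IsWeightFunction σ ∧ ConcaveOn ℝ (Set.Ici 0) σ ∧ WeightEquiv ω σ := by
  set x0 := max (Real.log t0) 1 with hx0def
  have hx0 : 1 ≤ x0 := le_max_right _ _
  have hbG : ∀ x y, x0 ≤ x → x ≤ y → G ω y ≤ C * Real.exp (y - x) * G ω x := by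
    intro x y hx hxy
    have hl : (1:ℝ) ≤ Real.exp (y - x) := Real.one_le_exp (by linarith)
    have ht : t0 ≤ Real.exp x := by
      calc t0 = Real.exp (Real.log t0) := (Real.exp_log ht0).symm
        _ ≤ Real.exp x := exp_le_exp.2 (le_trans (le_max_left _ _) hx)
    have key := hb _ hl _ ht
    calc G ω y = ω (Real.exp (y - x) * Real.exp x) := by
          unfold G; rw [← Real.exp_add]; ring_nf
      _ ≤ C * Real.exp (y - x) * ω (Real.exp x) := key
      _ = C * Real.exp (y - x) * G ω x := rfl
  have hbd : GBdd ω x0 := g_bddAbove hω hbG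
  set a := g ω x0 0 with hadef
  have ha : 0 ≤ a := g_nonneg hω hbd 0
  -- lower bound for Sig
  have hlow : ∀ t : ℝ, Real.exp x0 ≤ t → ω t - G ω (x0+1) ≤ Sig ω x0 t := by
    intro t ht
    have htpos : (0:ℝ) < t := lt_of_lt_of_le (exp_pos x0) ht
    have hlt : x0 ≤ Real.log t := by
      rw [← Real.log_exp x0]
      exact Real.log_le_log (exp_pos x0) ht
    have h1 : G ω (Real.log t) - G ω (x0+1) ≤ Psi ω x0 (Real.log t) :=
      Psi_lower hω hbd hx0 hlt
    have hGt : G ω (Real.log t) = ω t := by unfold G; rw [Real.exp_log htpos]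
    have hse : Sig ω x0 t = a + Psi ω x0 (Real.log t) := by
      conv_lhs => rw [← Real.exp_log htpos]
      exact sig_exp _ (by linarith)
    rw [hse]
    rw [hGt] at h1
    linarith
  -- upper bound for Sig
  have hupp : ∀ t : ℝ, Real.exp x0 ≤ t →
      Sig ω x0 t ≤ a + 12 * C * C * Real.exp 4 * ω t := by
    intro t ht
    have htpos : (0:ℝ) < t := lt_of_lt_of_le (exp_pos x0) ht
    have hlt : x0 ≤ Real.log t := by
      rw [← Real.log_exp x0]
      exact Real.log_le_log (exp_pos x0) ht
    have h1 : Psi ω x0 (Real.log t) ≤ 12 * C * G ω (Real.log t + 4) :=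
      Psi_upper hω hbd hC hx0 hbG hlt
    have h2 : G ω (Real.log t + 4) ≤ C * Real.exp 4 * G ω (Real.log t) := by
      have := hbG (Real.log t) (Real.log t + 4) hlt (by linarith)
      rwa [show Real.log t + 4 - Real.log t = 4 from by ring] at this
    have hGt : G ω (Real.log t) = ω t := by unfold G; rw [Real.exp_log htpos]
    have hse : Sig ω x0 t = a + Psi ω x0 (Real.log t) := by
      conv_lhs => rw [← Real.exp_log htpos]
      exact sig_exp _ (by linarith)
    rw [hse]
    have hCnn : (0:ℝ) ≤ 12 * C := by linarith
    have h3 : 12 * C * G ω (Real.log t + 4) ≤ 12 * C * (C * Real.exp 4 * G ω (Real.log t)) :=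
      mul_le_mul_of_nonneg_left h2 hCnn
    rw [hGt] at h3
    nlinarith [h1, h3]
  have hev1 : ∀ᶠ t : ℝ in atTop, Real.exp x0 ≤ t := eventually_ge_atTop _
  have hevnn : ∀ᶠ t : ℝ in atTop, (0:ℝ) ≤ t := eventually_ge_atTop _
  -- ω =O Sig
  have hO1 : ω =O[atTop] Sig ω x0 := by
    rw [Asymptotics.isBigO_iff]
    refine ⟨2, ?_⟩
    filter_upwards [hev1, hω.tendsto_atTop.eventually_ge_atTop (2 * G ω (x0+1)),
      hevnn] with t h1 h2 h3
    have hlt := hlow t h1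
    have hσnn : 0 ≤ Sig ω x0 t := sig_nonneg hω hbd h3
    have hωnn : 0 ≤ ω t := hω.nonneg t h3
    rw [Real.norm_eq_abs, Real.norm_eq_abs, abs_of_nonneg hωnn, abs_of_nonneg hσnn]
    linarith
  -- Sig =O ω
  have hO2 : Sig ω x0 =O[atTop] ω := by
    rw [Asymptotics.isBigO_iff]
    refine ⟨12 * C * C * Real.exp 4 + 1, ?_⟩
    filter_upwards [hev1, hω.tendsto_atTop.eventually_ge_atTop a, hevnn] with t h1 h2 h3
    have hut := hupp t h1
    have hσnn : 0 ≤ Sig ω x0 t := sig_nonneg hω hbd h3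
    have hωnn : 0 ≤ ω t := hω.nonneg t h3
    rw [Real.norm_eq_abs, Real.norm_eq_abs, abs_of_nonneg hωnn, abs_of_nonneg hσnn]
    nlinarith
  refine ⟨Sig ω x0, ?_, sig_concave hω hbd, hO1, hO2⟩
  refine ⟨sig_continuousOn hω hbd, fun s _ t _ hst => sig_mono hω hbd hst, sig_zero,
    fun t ht => sig_nonneg hω hbd ht, ?_, ?_, ?_, sig_comp_exp_convex hω hbd⟩
  · -- tendsto atTop
    refine tendsto_atTop_mono' atTop ?_
      (tendsto_atTop_add_const_right atTop (-(G ω (x0+1))) hω.tendsto_atTop)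
    filter_upwards [hev1] with t ht
    have := hlow t ht
    simpa using this
  · -- isBigO two mul
    rw [Asymptotics.isBigO_iff]
    refine ⟨2, ?_⟩
    filter_upwards [hevnn] with t ht
    have h2t : (0:ℝ) ≤ 2 * t := by linarith
    have hc := (sig_concave hω hbd).2 (Set.self_mem_Ici) (Set.mem_Ici.2 h2t)
      (by norm_num : (0:ℝ) ≤ 1/2) (by norm_num : (0:ℝ) ≤ 1/2) (by norm_num)
    simp only [smul_eq_mul, mul_zero, zero_add, sig_zero, add_zero] at hc
    rw [show (1/2 : ℝ) * (2 * t) = t from by ring] at hc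
    have hσnn : 0 ≤ Sig ω x0 t := sig_nonneg hω hbd ht
    have hσ2nn : 0 ≤ Sig ω x0 (2 * t) := sig_nonneg hω hbd h2t
    rw [Real.norm_eq_abs, Real.norm_eq_abs, abs_of_nonneg hσnn, abs_of_nonneg hσ2nn]
    linarith
  · exact hω.log_isLittleO.trans_isBigO hO1


theorem forward_dir (hω : IsWeightFunction ω) {σ : ℝ → ℝ} (hσ : IsWeightFunction σ)
    (hconc : ConcaveOn ℝ (Set.Ici 0) σ) (heq : WeightEquiv ω σ) :
    ∃ C : ℝ, 0 < C ∧ ∃ t0 : ℝ, 0 < t0 ∧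
      ∀ l : ℝ, 1 ≤ l → ∀ t : ℝ, t0 ≤ t → ω (l * t) ≤ C * l * ω t := by
  obtain ⟨c1, hc1, h1⟩ := heq.1.exists_pos
  obtain ⟨c2, hc2, h2⟩ := heq.2.exists_pos
  rw [Asymptotics.isBigOWith_iff] at h1 h2
  obtain ⟨T1, hT1⟩ := Filter.eventually_atTop.1 h1
  obtain ⟨T2, hT2⟩ := Filter.eventually_atTop.1 h2
  refine ⟨c1 * c2, mul_pos hc1 hc2, max T1 (max T2 1),
    lt_of_lt_of_le one_pos (le_trans (le_max_right _ _) (le_max_right _ _)), ?_⟩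
  intro l hl t ht
  have ht1 : T1 ≤ t := le_trans (le_max_left _ _) ht
  have ht2 : T2 ≤ t := le_trans (le_trans (le_max_left _ _) (le_max_right _ _)) ht
  have htp : (0:ℝ) < t :=
    lt_of_lt_of_le one_pos (le_trans (le_trans (le_max_right _ _) (le_max_right _ _)) ht)
  have hlt : t ≤ l * t := le_mul_of_one_le_left htp.le hl
  have hlp : (0:ℝ) < l := lt_of_lt_of_le one_pos hl
  have hltnn : (0:ℝ) ≤ l * t := by positivity
  -- σ (l * t) ≤ l * σ t by concavity and σ 0 = 0
  have hcav : σ (l * t) ≤ l * σ t := by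
    have hmem0 : (0:ℝ) ∈ Set.Ici (0:ℝ) := Set.self_mem_Ici
    have hmem : l * t ∈ Set.Ici (0:ℝ) := Set.mem_Ici.2 hltnn
    have ha : (0:ℝ) ≤ 1 - 1/l := by
      have : 1/l ≤ 1 := by rw [div_le_one hlp]; exact hl
      linarith
    have hb' : (0:ℝ) ≤ 1/l := by positivity
    have hc := hconc.2 hmem0 hmem ha hb' (by ring)
    simp only [smul_eq_mul, mul_zero, zero_add, hσ.map_zero] at hc
    rw [show (1/l) * (l * t) = t from by field_simp] at hc
    -- hc : (1 - 1/l) * 0 + 1/l * σ (l*t) ≤ σ t  (after simp the 0-part is gone)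
    have := mul_le_mul_of_nonneg_left hc hlp.le
    rw [mul_comm l (1/l * σ (l*t)), mul_assoc] at this
    calc σ (l * t) = 1/l * σ (l * t) * l := by field_simp
      _ ≤ σ t * l := by nlinarith [hc]
      _ = l * σ t := by ring
  have hω1 : ω (l * t) ≤ c1 * σ (l * t) := by
    have := hT1 (l * t) (le_trans ht1 hlt)
    rw [Real.norm_eq_abs, Real.norm_eq_abs, abs_of_nonneg (hσ.nonneg _ hltnn)] at this
    exact le_trans (le_abs_self _) this
  have hσ2 : σ t ≤ c2 * ω t := by
    have := hT2 t ht2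
    rw [Real.norm_eq_abs, Real.norm_eq_abs, abs_of_nonneg (hω.nonneg _ htp.le)] at this
    exact le_trans (le_abs_self _) this
  calc ω (l * t) ≤ c1 * σ (l * t) := hω1
    _ ≤ c1 * (l * σ t) := mul_le_mul_of_nonneg_left hcav hc1.le
    _ ≤ c1 * (l * (c2 * ω t)) := by
        refine mul_le_mul_of_nonneg_left (mul_le_mul_of_nonneg_left hσ2 hlp.le) hc1.le
    _ = c1 * c2 * l * ω t := by ring


end Thm11

/-- Theorem 11, (a) ⇔ (b). -/
theorem thm11_a_iff_b (ω : ℝ → ℝ) (hω : IsWeightFunction ω)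
    (ho : ω =o[atTop] (fun t : ℝ => t)) :
    (∃ σ : ℝ → ℝ, IsWeightFunction σ ∧ ConcaveOn ℝ (Set.Ici 0) σ ∧ WeightEquiv ω σ)
      ↔ (∃ C : ℝ, 0 < C ∧ ∃ t0 : ℝ, 0 < t0 ∧
          ∀ l : ℝ, 1 ≤ l → ∀ t : ℝ, t0 ≤ t → ω (l * t) ≤ C * l * ω t) := by
  constructor
  · rintro ⟨σ, h1, h2, h3⟩
    exact Thm11.forward_dir hω h1 h2 h3
  · rintro ⟨C, hC, t0, ht0, hb⟩
    refine Thm11.construction hω (C := max C 1) (le_max_right _ _) ht0 ?_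
    intro l hl t ht
    have h := hb l hl t ht
    have hωnn : 0 ≤ ω t := hω.nonneg t (by linarith)
    have hCle : C ≤ max C 1 := le_max_left _ _
    nlinarith [mul_nonneg (sub_nonneg.2 hCle)
      (mul_nonneg (le_trans zero_le_one hl) hωnn)]
end
end
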